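/- arXiv:nlin/0604070 — 4 statements merged into one kernel-verified Lean document; each statement's English description precedes it below -/
import Mathlib

section
/- Let n, r be natural numbers with 2r < n, and let Q be a real polynomial in the variables x, u_0, u_1, …, u_r. If for every polynomial f ∈ ℝ[x] of degree at most n the polynomial T_Q[f] = Q(x, f, f', …, f^{(r)}) has degree at most n, then every monomial of Q has total degree at most 1 in the variables u_0, …, u_r; that is, any operator of order r < n/2 mapping P_n into P_n is necessarily linear, Q = p(x) + Σ_{i=0}^{r} p_i(x)·u_i. -/
set_option maxHeartbeats 1000000

open MvPolynomial Polynomial BigOperators Finset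

namespace LowOrderAux

lemma upoly_zero (p : Polynomial ℝ) (Z : Finset ℕ)
    (hz : ∀ z ∈ Z, p.eval (z : ℝ) = 0) (hc : p.natDegree < Z.card) : p = 0 := by
  apply Polynomial.eq_zero_of_natDegree_lt_card_of_eval_eq_zero' p (Z.image (Nat.cast : ℕ → ℝ))
  · intro i hi
    rcases Finset.mem_image.mp hi with ⟨z, hzZ, rfl⟩
    exact hz z hzZ
  · rwa [Finset.card_image_of_injective _ Nat.cast_injective]

variable {d : ℕ}

lemma aeval_eq_eval (y : Fin d → ℝ) (p : MvPolynomial (Fin d) ℝ) :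
    MvPolynomial.aeval y p = MvPolynomial.eval y p := rfl

/-- restriction of a multivariate polynomial to one variable -/
noncomputable def restr (B : MvPolynomial (Fin d) ℝ) (t : Fin d) (x : Fin d → ℝ) :
    Polynomial ℝ :=
  MvPolynomial.aeval (fun s => if s = t then Polynomial.X else Polynomial.C (x s)) B

lemma restr_eval (B : MvPolynomial (Fin d) ℝ) (t : Fin d) (x : Fin d → ℝ) (y : ℝ) :
    (restr B t x).eval y = MvPolynomial.eval (Function.update x t y) B := by
  have h := DFunLike.congr_fun
    (MvPolynomial.comp_aeval
      (fun s => if s = t then Polynomial.X else Polynomial.C (x s))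
      (Polynomial.aeval y : Polynomial ℝ →ₐ[ℝ] ℝ)) B
  simp only [AlgHom.coe_comp, Function.comp_apply] at h
  have hfun : (fun i => (Polynomial.aeval y) (if i = t then Polynomial.X else Polynomial.C (x i)))
      = Function.update x t y := by
    funext s
    by_cases hs : s = t <;> simp [hs, Function.update_apply]
  rw [hfun] at h
  rw [← aeval_eq_eval, ← h]
  rfl

lemma natDegree_restr_le (B : MvPolynomial (Fin d) ℝ) (t : Fin d) (x : Fin d → ℝ) :
    (restr B t x).natDegree ≤ MvPolynomial.degreeOf t B := by
  classical
  rw [restr]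
  conv_lhs => rw [B.as_sum]
  rw [map_sum]
  apply Polynomial.natDegree_sum_le_of_forall_le
  intro m hm
  rw [MvPolynomial.aeval_monomial]
  refine le_trans (Polynomial.natDegree_mul_le) ?_
  have h1 : (algebraMap ℝ (Polynomial ℝ) (MvPolynomial.coeff m B)).natDegree = 0 := by
    simp [Polynomial.algebraMap_apply]
  rw [h1, zero_add]
  rw [Finsupp.prod]
  refine le_trans (Polynomial.natDegree_prod_le _ _) ?_
  have h2 : ∀ s ∈ m.support,
      ((if s = t then Polynomial.X else Polynomial.C (x s)) ^ m s).natDegree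
        = if s = t then m s else 0 := by
    intro s _
    by_cases hs : s = t <;> simp [hs, Polynomial.natDegree_X_pow]
  rw [Finset.sum_congr rfl h2, Finset.sum_ite_eq' m.support t (fun s => m s)]
  by_cases ht : t ∈ m.support
  · simp only [ht, if_true]
    exact MvPolynomial.monomial_le_degreeOf t hm
  · simp [ht]


/-- A multivariate polynomial of degree ≤ ρ in each variable vanishing on the grid
`[0,M]^d` (with `ρ ≤ M`) is zero. -/
lemma gridZero : ∀ (d ρ M : ℕ) (B : MvPolynomial (Fin d) ℝ), ρ ≤ M →
    (∀ t, MvPolynomial.degreeOf t B ≤ ρ) →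
    (∀ x : Fin d → ℕ, (∀ t, x t ≤ M) → MvPolynomial.eval (fun t => (x t : ℝ)) B = 0) →
    B = 0 := by
  intro d
  induction d with
  | zero =>
    intro ρ M B _ _ hv
    have h0 : MvPolynomial.eval (fun t : Fin 0 => ((0 : ℕ) : ℝ)) B = 0 :=
      hv (fun _ => 0) (fun t => t.elim0)
    rcases MvPolynomial.C_surjective (Fin 0) B with ⟨c, rfl⟩
    rw [MvPolynomial.eval_C] at h0
    rw [h0, map_zero]
  | succ d ih =>
    intro ρ M B hρM hdeg hv
    set P := MvPolynomial.finSuccEquiv ℝ d B with hP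
    have hc : ∀ i, P.coeff i = 0 := by
      intro i
      apply ih ρ M _ hρM
      · intro t
        exact le_trans (MvPolynomial.degreeOf_coeff_finSuccEquiv B t i) (hdeg t.succ)
      · intro x hx
        set q := Polynomial.map (MvPolynomial.eval (fun t => (x t : ℝ))) P with hq
        have hqz : q = 0 := by
          apply upoly_zero _ (Finset.range (M+1))
          · intro z hz
            have h1 : Polynomial.eval (z : ℝ) q
                = MvPolynomial.eval (Fin.cons (z:ℝ) (fun t => (x t : ℝ))) B :=
              (MvPolynomial.eval_eq_eval_mv_eval' _ _ _).symm
            have h2 : (Fin.cons (z:ℝ) (fun t => (x t : ℝ)))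
                = fun t => (((Fin.cons z x : Fin (d+1) → ℕ) t : ℕ) : ℝ) := by
              funext t
              refine Fin.cases ?_ ?_ t <;> simp
            rw [h1, h2]
            apply hv (Fin.cons z x)
            intro t
            refine Fin.cases ?_ ?_ t
            · simpa using Nat.lt_succ_iff.mp (Finset.mem_range.mp hz)
            · simpa using hx
          · rw [Finset.card_range]
            calc q.natDegree ≤ P.natDegree := Polynomial.natDegree_map_le
              _ = MvPolynomial.degreeOf 0 B := MvPolynomial.natDegree_finSuccEquiv B
              _ ≤ ρ := hdeg 0
              _ < M + 1 := Nat.lt_succ_of_le hρM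
        have : q.coeff i = MvPolynomial.eval (fun t => (x t : ℝ)) (P.coeff i) :=
          Polynomial.coeff_map _ _
        rw [← this, hqz, Polynomial.coeff_zero]
    have hP0 : P = 0 := Polynomial.ext fun i => by rw [hc i, Polynomial.coeff_zero]
    have := congrArg (MvPolynomial.finSuccEquiv ℝ d).symm hP0
    simpa [hP] using this

/-- degreeOf is additive on products of nonzero polynomials (reals). -/
lemma degreeOf_mul_eq (B C : MvPolynomial (Fin d) ℝ) (t : Fin d)
    (hB : B ≠ 0) (hC : C ≠ 0) :
    MvPolynomial.degreeOf t (B * C) = MvPolynomial.degreeOf t B + MvPolynomial.degreeOf t C := by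
  classical
  rcases d with _ | e
  · exact t.elim0
  -- move coordinate t to 0 via the swap equivalence
  set σ : Fin (e+1) ≃ Fin (e+1) := Equiv.swap t 0 with hσ
  have hr : ∀ (D : MvPolynomial (Fin (e+1)) ℝ),
      MvPolynomial.degreeOf t D = MvPolynomial.degreeOf 0 (MvPolynomial.rename σ D) := by
    intro D
    have := MvPolynomial.degreeOf_rename_of_injective (p := D) (f := ⇑σ) σ.injective t
    rw [this.symm]
    congr 1
    simp [hσ, Equiv.swap_apply_left]
  rw [hr, hr, hr]
  rw [map_mul]
  set B' := MvPolynomial.rename ⇑σ B with hB'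
  set C' := MvPolynomial.rename ⇑σ C with hC'
  have hB'0 : B' ≠ 0 := by
    intro hcon
    apply hB
    have : MvPolynomial.rename ⇑σ.symm (MvPolynomial.rename ⇑σ B) = 0 := by rw [← hB', hcon, map_zero]
    rwa [MvPolynomial.rename_rename, show (⇑σ.symm ∘ ⇑σ) = id by funext z; simp, MvPolynomial.rename_id] at this
  have hC'0 : C' ≠ 0 := by
    intro hcon
    apply hC
    have : MvPolynomial.rename ⇑σ.symm (MvPolynomial.rename ⇑σ C) = 0 := by rw [← hC', hcon, map_zero]
    rwa [MvPolynomial.rename_rename, show (⇑σ.symm ∘ ⇑σ) = id by funext z; simp, MvPolynomial.rename_id] at this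
  rw [← MvPolynomial.natDegree_finSuccEquiv, ← MvPolynomial.natDegree_finSuccEquiv,
    ← MvPolynomial.natDegree_finSuccEquiv, map_mul]
  apply Polynomial.natDegree_mul
  · simpa using hB'0
  · simpa using hC'0


/-- substitute the value c for variable t -/
noncomputable def substP (t : Fin d) (c : ℝ) (B : MvPolynomial (Fin d) ℝ) :
    MvPolynomial (Fin d) ℝ :=
  MvPolynomial.aeval (fun s => if s = t then MvPolynomial.C c else MvPolynomial.X s) B

lemma substP_eval (t : Fin d) (c : ℝ) (B : MvPolynomial (Fin d) ℝ) (y : Fin d → ℝ) :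
    MvPolynomial.eval y (substP t c B) = MvPolynomial.eval (Function.update y t c) B := by
  have h := DFunLike.congr_fun
    (MvPolynomial.comp_aeval
      (fun s => if s = t then MvPolynomial.C c else MvPolynomial.X s)
      (MvPolynomial.aeval y : MvPolynomial (Fin d) ℝ →ₐ[ℝ] ℝ)) B
  simp only [AlgHom.coe_comp, Function.comp_apply] at h
  have hfun : (fun i => (MvPolynomial.aeval y) (if i = t then MvPolynomial.C c else MvPolynomial.X i))
      = Function.update y t c := by
    funext s
    by_cases hs : s = t <;> simp [hs, Function.update_apply]
  rw [hfun] at h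
  rw [← aeval_eq_eval, ← aeval_eq_eval, ← h]
  rfl

lemma degreeOf_substP_le (t : Fin d) (c : ℝ) (B : MvPolynomial (Fin d) ℝ) (u : Fin d) :
    MvPolynomial.degreeOf u (substP t c B) ≤ MvPolynomial.degreeOf u B := by
  classical
  rw [substP]
  conv_lhs => rw [B.as_sum]
  rw [map_sum]
  refine le_trans (MvPolynomial.degreeOf_sum_le _ _ _) ?_
  apply Finset.sup_le
  intro m hm
  rw [MvPolynomial.aeval_monomial]
  refine le_trans (MvPolynomial.degreeOf_mul_le _ _ _) ?_
  have h0 : MvPolynomial.degreeOf u (algebraMap ℝ (MvPolynomial (Fin d) ℝ) (MvPolynomial.coeff m B)) = 0 := by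
    rw [MvPolynomial.algebraMap_eq, MvPolynomial.degreeOf_C]
  rw [h0, zero_add, Finsupp.prod]
  refine le_trans (MvPolynomial.degreeOf_prod_le _ _ _) ?_
  have h2 : ∀ s ∈ m.support,
      MvPolynomial.degreeOf u ((if s = t then MvPolynomial.C c else MvPolynomial.X s) ^ m s)
        ≤ if s = u then m s else 0 := by
    intro s _
    refine le_trans (MvPolynomial.degreeOf_pow_le _ _ _) ?_
    by_cases hs : s = t
    · simp [hs, MvPolynomial.degreeOf_C]
    · simp only [hs, if_false]
      by_cases hsu : s = u
      · subst hsu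
        simp [MvPolynomial.degreeOf_X]
      · have : MvPolynomial.degreeOf u (MvPolynomial.X s : MvPolynomial (Fin d) ℝ) = 0 := by
          rw [MvPolynomial.degreeOf_X, if_neg]
          intro hcon
          exact hsu hcon.symm
        simp [this, hsu]
  refine le_trans (Finset.sum_le_sum h2) ?_
  rw [Finset.sum_ite_eq' m.support u (fun s => m s)]
  by_cases hu : u ∈ m.support
  · simp only [hu, if_true]
    exact MvPolynomial.monomial_le_degreeOf u hm
  · simp [hu]

lemma substP_of_degreeOf_zero (t : Fin d) (c : ℝ) (B : MvPolynomial (Fin d) ℝ)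
    (h : MvPolynomial.degreeOf t B = 0) : substP t c B = B := by
  classical
  rw [substP]
  conv_rhs => rw [B.as_sum]
  conv_lhs => rw [B.as_sum]
  rw [map_sum]
  apply Finset.sum_congr rfl
  intro m hm
  have hmt : m t = 0 := by
    have h1 := MvPolynomial.monomial_le_degreeOf t hm
    omega
  rw [MvPolynomial.aeval_monomial, MvPolynomial.monomial_eq]
  congr 1
  rw [Finsupp.prod, Finsupp.prod]
  apply Finset.prod_congr rfl
  intro s hs
  have hst : s ≠ t := by
    intro hcon
    subst hcon
    exact (Finsupp.mem_support_iff.mp hs) hmt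
  simp [hst]

lemma X_sub_C_ne_zero' (t : Fin d) (c : ℝ) :
    (MvPolynomial.X t - MvPolynomial.C c : MvPolynomial (Fin d) ℝ) ≠ 0 := by
  intro hcon
  have h1 := congrArg (MvPolynomial.coeff (Finsupp.single t 1)) hcon
  classical
  rw [MvPolynomial.coeff_sub, MvPolynomial.coeff_X, MvPolynomial.coeff_zero] at h1
  rw [MvPolynomial.coeff_C, if_neg (show ¬ ((0 : Fin d →₀ ℕ) = Finsupp.single t 1) from fun h => (Finsupp.single_ne_zero.mpr one_ne_zero) h.symm)] at h1
  norm_num at h1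

lemma degreeOf_X_sub_C_self (t : Fin d) (c : ℝ) :
    MvPolynomial.degreeOf t (MvPolynomial.X t - MvPolynomial.C c : MvPolynomial (Fin d) ℝ) = 1 := by
  classical
  apply le_antisymm
  · rw [sub_eq_add_neg]
    refine le_trans (MvPolynomial.degreeOf_add_le _ _ _) ?_
    rw [show (-MvPolynomial.C c : MvPolynomial (Fin d) ℝ) = MvPolynomial.C (-c) by rw [map_neg]]
    simp [MvPolynomial.degreeOf_X, MvPolynomial.degreeOf_C]
  · rw [MvPolynomial.degreeOf_eq_sup]
    have hmem : Finsupp.single t 1 ∈ (MvPolynomial.X t - MvPolynomial.C c : MvPolynomial (Fin d) ℝ).support := by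
      rw [MvPolynomial.mem_support_iff, MvPolynomial.coeff_sub, MvPolynomial.coeff_X,
        MvPolynomial.coeff_C, if_neg (show ¬ ((0 : Fin d →₀ ℕ) = Finsupp.single t 1) from fun h => (Finsupp.single_ne_zero.mpr one_ne_zero) h.symm)]
      norm_num
    have := Finset.le_sup (f := fun m : Fin d →₀ ℕ => m t) hmem
    simpa using this

lemma degreeOf_X_sub_C_ne (t u : Fin d) (c : ℝ) (h : u ≠ t) :
    MvPolynomial.degreeOf u (MvPolynomial.X t - MvPolynomial.C c : MvPolynomial (Fin d) ℝ) = 0 := by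
  classical
  refine Nat.le_zero.mp ?_
  rw [sub_eq_add_neg]
  refine le_trans (MvPolynomial.degreeOf_add_le _ _ _) ?_
  rw [show (-MvPolynomial.C c : MvPolynomial (Fin d) ℝ) = MvPolynomial.C (-c) by rw [map_neg]]
  have h1 : MvPolynomial.degreeOf u (MvPolynomial.X t : MvPolynomial (Fin d) ℝ) = 0 := by
    rw [MvPolynomial.degreeOf_X]
    simp [h]
  rw [h1, MvPolynomial.degreeOf_C]
  simp

/-- factor theorem for one variable of a multivariate polynomial -/
lemma exists_factor (B : MvPolynomial (Fin d) ℝ) (t : Fin d) (c : ℝ)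
    (hface : substP t c B = 0) :
    ∃ B', B = (MvPolynomial.X t - MvPolynomial.C c) * B' := by
  classical
  rcases d with _ | e
  · exact t.elim0
  -- reduce to coordinate 0 via swap
  set σ : Fin (e+1) ≃ Fin (e+1) := Equiv.swap t 0 with hσ
  set Bs := MvPolynomial.rename ⇑σ B with hBs
  set P := MvPolynomial.finSuccEquiv ℝ e Bs with hP
  have hroot : Polynomial.eval (MvPolynomial.C c) P = 0 := by
    apply MvPolynomial.funext
    intro y
    have h1 : (MvPolynomial.eval y) (Polynomial.eval (MvPolynomial.C c) P)
        = Polynomial.eval ((MvPolynomial.eval y) (MvPolynomial.C c))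
            (Polynomial.map (MvPolynomial.eval y) P) := by
      rw [Polynomial.eval_map,
        show Polynomial.eval (MvPolynomial.C c) P
          = Polynomial.eval₂ (RingHom.id _) (MvPolynomial.C c) P from rfl,
        Polynomial.hom_eval₂, RingHom.comp_id]
    rw [h1, MvPolynomial.eval_C]
    have h2 : Polynomial.eval c (Polynomial.map (MvPolynomial.eval y) P)
        = MvPolynomial.eval (Fin.cons c y) Bs := (MvPolynomial.eval_eq_eval_mv_eval' _ _ _).symm
    rw [h2, hBs, MvPolynomial.eval_rename]
    have h3 : ((Fin.cons c y : Fin (e+1) → ℝ) ∘ ⇑σ) = Function.update ((Fin.cons c y : Fin (e+1) → ℝ) ∘ ⇑σ) t c := by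
      funext s
      rw [Function.update_apply]
      by_cases hs : s = t
      · subst hs
        simp [hσ, Equiv.swap_apply_left, Function.comp_apply]
      · simp [hs]
    rw [h3, ← substP_eval, hface, map_zero, map_zero]
  rcases Polynomial.dvd_iff_isRoot.mpr hroot with ⟨P1, hP1⟩
  refine ⟨MvPolynomial.rename ⇑σ ((MvPolynomial.finSuccEquiv ℝ e).symm P1), ?_⟩
  have hXc : (MvPolynomial.finSuccEquiv ℝ e).symm
      (Polynomial.X - Polynomial.C (MvPolynomial.C c)) = MvPolynomial.X 0 - MvPolynomial.C c := by
    apply (MvPolynomial.finSuccEquiv ℝ e).injective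
    rw [AlgEquiv.apply_symm_apply, map_sub, MvPolynomial.finSuccEquiv_X_zero]
    congr 1
    simp [MvPolynomial.finSuccEquiv_apply, MvPolynomial.eval₂Hom_C]
  have hBsfac : Bs = (MvPolynomial.X 0 - MvPolynomial.C c) * (MvPolynomial.finSuccEquiv ℝ e).symm P1 := by
    have := congrArg (MvPolynomial.finSuccEquiv ℝ e).symm hP1
    rw [AlgEquiv.symm_apply_apply, map_mul, hXc] at this
    exact this
  have hback := congrArg (MvPolynomial.rename ⇑σ) hBsfac
  rw [hBs, MvPolynomial.rename_rename,
    show (⇑σ ∘ ⇑σ) = id by funext z; simp [hσ], MvPolynomial.rename_id, AlgHom.id_apply, map_mul] at hback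
  rw [hback]
  congr 1
  rw [map_sub, MvPolynomial.rename_X, MvPolynomial.rename_C]
  congr 1
  simp [hσ]


lemma update_cast (x : Fin d → ℕ) (t : Fin d) (z : ℕ) :
    Function.update (fun s => (x s : ℝ)) t (z:ℝ) = fun s => ((Function.update x t z s : ℕ) : ℝ) := by
  funext s
  by_cases hs : s = t <;> simp [hs, Function.update_apply]

/-- The core combinatorial lemma. -/
lemma coreH (d : ℕ) (hd : 2 ≤ d) :
    ∀ ρ : ℕ, ∀ (ν a b : ℕ) (B : MvPolynomial (Fin d) ℝ),
    a ≤ b → 2*ρ + (b - a) < ν →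
    (∀ t, MvPolynomial.degreeOf t B ≤ ρ) →
    (∀ x : Fin d → ℕ, (∑ t, x t) < a → MvPolynomial.eval (fun t => (x t : ℝ)) B = 0) →
    (∀ x : Fin d → ℕ, (∀ t, x t ≤ ν) → ν + b < ∑ t, x t →
        MvPolynomial.eval (fun t => (x t : ℝ)) B = 0) →
    B = 0 := by
  intro ρ
  induction ρ using Nat.strong_induction_on with
  | _ ρ IH =>
  intro ν a b B hab hν hdeg hA hB
  classical
  -- strip lemma (A_k)
  have hAk : ∀ (K : Finset (Fin d)) (x : Fin d → ℕ),
      (∑ t ∈ Kᶜ, x t) + K.card * ρ < a → MvPolynomial.eval (fun t => (x t : ℝ)) B = 0 := by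
    intro K
    induction K using Finset.induction_on with
    | empty => intro x hx; apply hA; simpa using hx
    | @insert j K' hj IH2 =>
      intro x hx
      rw [Finset.card_insert_of_notMem hj] at hx
      set g := restr B j (fun t => (x t : ℝ)) with hg
      have hg0 : g = 0 := by
        apply upoly_zero _ (Finset.range (ρ+1))
        · intro z hz
          rw [Finset.mem_range] at hz
          rw [hg, restr_eval, update_cast]
          apply IH2
          have hjK : j ∈ K'ᶜ := by simpa using hj
          rw [← Finset.add_sum_erase _ _ hjK]
          have h2 : ∑ s ∈ K'ᶜ.erase j, Function.update x j z s
              = ∑ s ∈ (insert j K')ᶜ, x s := by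
            rw [Finset.compl_insert]
            exact Finset.sum_congr rfl
              (fun s hs => by rw [Function.update_apply, if_neg (Finset.ne_of_mem_erase hs)])
          rw [h2, Function.update_self]
          have hmul : (K'.card + 1) * ρ = K'.card * ρ + ρ := by ring
          omega
        · rw [Finset.card_range]
          exact Nat.lt_succ_of_le (le_trans (natDegree_restr_le _ _ _) (hdeg j))
      have := congrArg (Polynomial.eval ((x j : ℕ) : ℝ)) hg0
      rw [hg, restr_eval, Function.update_eq_self, Polynomial.eval_zero] at this
      exact this
  by_cases hB0 : B = 0
  · exact hB0
  by_cases htriv : d * ρ < a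
  · -- trivial case: vanishing on the [0,ρ]^d grid
    apply gridZero d ρ ρ B le_rfl hdeg
    intro x hx
    have h0d : (0:ℕ) < d := by omega
    have hcompl : ((Finset.univ.erase (⟨0, h0d⟩ : Fin d))ᶜ : Finset (Fin d)) = {⟨0, h0d⟩} := by
      simp
    apply hAk (Finset.univ.erase (⟨0, h0d⟩ : Fin d))
    rw [hcompl, Finset.sum_singleton, Finset.card_erase_of_mem (Finset.mem_univ _),
      Finset.card_univ, Fintype.card_fin]
    have h1 := hx (⟨0, h0d⟩ : Fin d)
    have h2 : (d-1)*ρ + ρ = d * ρ := by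
      cases d with
      | zero => omega
      | succ e => rw [Nat.succ_sub_one]; ring
    omega
  push_neg at htriv
  -- integer face vanishing
  have hfaceInt : ∀ (t : Fin d) (x : Fin d → ℕ), x t = ν → (∀ s, x s ≤ ν) →
      MvPolynomial.eval (fun s => (x s : ℝ)) B = 0 := by
    intro t x hxt hxle
    have : Nontrivial (Fin d) := Fin.nontrivial_iff_two_le.mpr hd
    obtain ⟨t', ht'⟩ : ∃ t' : Fin d, t' ≠ t := exists_ne t
    set S := ∑ s ∈ ({t}ᶜ : Finset (Fin d)).erase t', x s with hS
    set g := restr B t' (fun s => (x s : ℝ)) with hg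
    have ht'c : t' ∈ ({t}ᶜ : Finset (Fin d)) := by simpa using ht'
    have hsum_upd : ∀ z : ℕ, ∑ s ∈ ({t}ᶜ : Finset (Fin d)), Function.update x t' z s = z + S := by
      intro z
      rw [← Finset.add_sum_erase _ _ ht'c, Function.update_self]
      congr 1
      exact Finset.sum_congr rfl
        (fun s hs => by rw [Function.update_apply, if_neg (Finset.ne_of_mem_erase hs)])
    have hsum_tot : ∀ z : ℕ, ∑ s, Function.update x t' z s = ν + (z + S) := by
      intro z
      rw [← Finset.sum_compl_add_sum ({t} : Finset (Fin d)) (Function.update x t' z),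
        hsum_upd z, Finset.sum_singleton, Function.update_apply, if_neg (Ne.symm ht'), hxt]
      ring
    have hg0 : g = 0 := by
      apply upoly_zero _ ((Finset.range (a - (ρ + S))) ∪ (Finset.Icc (b+1-S) ν))
      · intro z hz
        rw [hg, restr_eval, update_cast]
        rcases Finset.mem_union.mp hz with hz | hz
        · rw [Finset.mem_range] at hz
          apply hAk {t}
          rw [Finset.card_singleton, hsum_upd z]
          omega
        · rw [Finset.mem_Icc] at hz
          apply hB
          · intro s
            rw [Function.update_apply]
            by_cases hs : s = t' <;> simp [hs, hz.2, hxle s]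
          · rw [hsum_tot z]
            omega
      · rw [Finset.card_union_of_disjoint, Finset.card_range, Nat.card_Icc]
        · have h1 : g.natDegree ≤ ρ := le_trans (natDegree_restr_le _ _ _) (hdeg t')
          omega
        · rw [Finset.disjoint_left]
          intro z hz1 hz2
          rw [Finset.mem_range] at hz1
          rw [Finset.mem_Icc] at hz2
          omega
    have := congrArg (Polynomial.eval ((x t' : ℕ) : ℝ)) hg0
    rw [hg, restr_eval, Function.update_eq_self, Polynomial.eval_zero] at this
    exact this
  -- polynomial face vanishing
  have hfacePoly : ∀ t : Fin d, substP t ((ν:ℕ):ℝ) B = 0 := by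
    intro t
    apply gridZero d ρ ν _ (by omega) (fun u => le_trans (degreeOf_substP_le _ _ _ _) (hdeg u))
    intro x hx
    rw [substP_eval, update_cast]
    apply hfaceInt t
    · rw [Function.update_self]
    · intro s
      rw [Function.update_apply]
      by_cases hs : s = t <;> simp [hs, hx s]
  -- degenerate case : some variable not occurring
  by_cases hdeg0 : ∃ t, MvPolynomial.degreeOf t B = 0
  · rcases hdeg0 with ⟨t, ht⟩
    rw [← substP_of_degreeOf_zero t ((ν:ℕ):ℝ) B ht]
    exact hfacePoly t
  push_neg at hdeg0
  have hρ1 : 1 ≤ ρ := by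
    have h1 := hdeg0 ⟨0, by omega⟩
    have h2 := hdeg ⟨0, by omega⟩
    omega
  -- divide by all the faces
  have hdiv : ∀ F : Finset (Fin d), ∃ B',
      B = (∏ t ∈ F, (MvPolynomial.X t - MvPolynomial.C ((ν:ℕ):ℝ))) * B' := by
    intro F
    induction F using Finset.induction_on with
    | empty => exact ⟨B, by simp⟩
    | @insert t F' htF IH2 =>
      rcases IH2 with ⟨B', hB'⟩
      have hsub : substP t ((ν:ℕ):ℝ) B' = 0 := by
        have h1 := hfacePoly t
        rw [hB'] at h1
        rw [substP, map_mul] at h1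
        have h2 : (MvPolynomial.aeval
              (fun s => if s = t then MvPolynomial.C ((ν:ℕ):ℝ) else MvPolynomial.X s))
            (∏ u ∈ F', (MvPolynomial.X u - MvPolynomial.C ((ν:ℕ):ℝ)))
            = ∏ u ∈ F', (MvPolynomial.X u - MvPolynomial.C ((ν:ℕ):ℝ)) := by
          rw [map_prod]
          apply Finset.prod_congr rfl
          intro u hu
          have hut : u ≠ t := by rintro rfl; exact htF hu
          rw [map_sub, MvPolynomial.aeval_X, if_neg hut, MvPolynomial.aeval_C,
            MvPolynomial.algebraMap_eq]
        rw [h2] at h1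
        have h3 : (∏ u ∈ F', (MvPolynomial.X u - MvPolynomial.C ((ν:ℕ):ℝ))) ≠ 0 :=
          Finset.prod_ne_zero_iff.mpr (fun u _ => X_sub_C_ne_zero' u _)
        exact (mul_eq_zero.mp h1).resolve_left h3
      rcases exists_factor B' t _ hsub with ⟨B'', hB''⟩
      refine ⟨B'', ?_⟩
      rw [hB', hB'', Finset.prod_insert htF]
      ring
  rcases hdiv Finset.univ with ⟨B', hBfac⟩
  have hB'0 : B' ≠ 0 := by
    rintro rfl
    rw [mul_zero] at hBfac
    exact hB0 hBfac
  have hprodne : ∀ (G : Finset (Fin d)),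
      (∏ u ∈ G, (MvPolynomial.X u - MvPolynomial.C ((ν:ℕ):ℝ))) ≠ 0 :=
    fun G => Finset.prod_ne_zero_iff.mpr (fun u _ => X_sub_C_ne_zero' u _)
  have hdegB' : ∀ t, MvPolynomial.degreeOf t B' + 1 ≤ ρ := by
    intro t
    have h1 : B = (MvPolynomial.X t - MvPolynomial.C ((ν:ℕ):ℝ)) *
        ((∏ u ∈ Finset.univ.erase t, (MvPolynomial.X u - MvPolynomial.C ((ν:ℕ):ℝ))) * B') := by
      rw [hBfac, ← Finset.mul_prod_erase _ _ (Finset.mem_univ t)]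
      ring
    have h2 : MvPolynomial.degreeOf t B
        = 1 + (MvPolynomial.degreeOf t (∏ u ∈ Finset.univ.erase t,
            (MvPolynomial.X u - MvPolynomial.C ((ν:ℕ):ℝ))) + MvPolynomial.degreeOf t B') := by
      rw [h1, degreeOf_mul_eq _ _ _ (X_sub_C_ne_zero' t _)
        (mul_ne_zero (hprodne _) hB'0), degreeOf_X_sub_C_self,
        degreeOf_mul_eq _ _ _ (hprodne _) hB'0]
    have h3 := hdeg t
    omega
  -- recursion
  have hBz : B' = 0 := by
    apply IH (ρ-1) (by omega) (ν-1) a (b+1) B' (by omega) (by omega)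
      (fun t => by have := hdegB' t; omega)
    · -- (A) for B', by strong induction on the number of coordinates equal to ν
      have main : ∀ (N : ℕ) (x : Fin d → ℕ),
          (Finset.univ.filter (fun t => x t = ν)).card = N → (∑ t, x t) < a →
          MvPolynomial.eval (fun t => (x t:ℝ)) B' = 0 := by
        intro N
        induction N using Nat.strong_induction_on with
        | _ N IHN =>
        intro x hcard hsum
        rcases Nat.eq_zero_or_pos N with hN | hN
        · -- no coordinate equal to ν
          have hall : ∀ t, x t ≠ ν := by
            intro t hcon
            have hmem : t ∈ Finset.univ.filter (fun t => x t = ν) := by simp [hcon]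
            rw [hN, Finset.card_eq_zero] at hcard
            rw [hcard] at hmem
            simp at hmem
          have h1 := hA x hsum
          rw [hBfac, map_mul] at h1
          rcases mul_eq_zero.mp h1 with h2 | h2
          · exfalso
            rw [map_prod] at h2
            rcases Finset.prod_eq_zero_iff.mp h2 with ⟨u, _, hu⟩
            rw [map_sub, MvPolynomial.eval_X, MvPolynomial.eval_C, sub_eq_zero] at hu
            exact hall u (Nat.cast_injective hu)
          · exact h2
        · -- pick a coordinate equal to ν
          have hne : (Finset.univ.filter (fun t => x t = ν)).Nonempty := by
            rw [← Finset.card_pos, hcard]; exact hN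
          rcases hne with ⟨t, ht⟩
          have hxt : x t = ν := (Finset.mem_filter.mp ht).2
          set R := ∑ s ∈ Finset.univ.erase t, x s with hR
          have hsumx : ∑ s, x s = ν + R := by
            rw [hR, ← Finset.add_sum_erase _ _ (Finset.mem_univ t), hxt]
          set g := restr B' t (fun s => (x s:ℝ)) with hg
          have hg0 : g = 0 := by
            apply upoly_zero _ ((Finset.range (a - R)).erase ν)
            · intro z hz
              rw [Finset.mem_erase, Finset.mem_range] at hz
              rw [hg, restr_eval, update_cast]
              apply IHN ((Finset.univ.filter (fun s => Function.update x t z s = ν)).card) ?_ _ rfl ?_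
              · -- the count decreased
                have hfeq : Finset.univ.filter (fun s => Function.update x t z s = ν)
                    = (Finset.univ.filter (fun s => x s = ν)).erase t := by
                  ext s
                  rw [Finset.mem_filter, Finset.mem_erase, Finset.mem_filter, Function.update_apply]
                  by_cases hs : s = t
                  · subst hs
                    simp [hz.1]
                  · simp [hs]
                rw [hfeq, Finset.card_erase_of_mem ht, hcard]
                omega
              · -- sum still small
                have : ∑ s, Function.update x t z s = z + R := by
                  rw [← Finset.add_sum_erase _ _ (Finset.mem_univ t), Function.update_self]
                  congr 1
                  exact Finset.sum_congr rfl (fun s hs => by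
                    rw [Function.update_apply, if_neg (Finset.ne_of_mem_erase hs)])
                omega
            · rw [Finset.card_erase_of_mem, Finset.card_range]
              · have h1 : g.natDegree ≤ ρ - 1 :=
                  le_trans (natDegree_restr_le _ _ _) (by have := hdegB' t; omega)
                omega
              · rw [Finset.mem_range]
                omega
          have := congrArg (Polynomial.eval ((x t : ℕ) : ℝ)) hg0
          rw [hg, restr_eval, Function.update_eq_self, Polynomial.eval_zero] at this
          exact this
      intro x hx
      exact main _ x rfl hx
    · -- (B) for B'
      intro x hxle hxsum
      have h1 := hB x (fun t => le_trans (hxle t) (by omega)) (by omega)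
      rw [hBfac, map_mul] at h1
      rcases mul_eq_zero.mp h1 with h2 | h2
      · exfalso
        rw [map_prod] at h2
        rcases Finset.prod_eq_zero_iff.mp h2 with ⟨u, _, hu⟩
        rw [map_sub, MvPolynomial.eval_X, MvPolynomial.eval_C, sub_eq_zero] at hu
        have := Nat.cast_injective (R := ℝ) hu
        have h4 := hxle u
        omega
      · exact h2
  rw [hBz, mul_zero] at hBfac
  exact hBfac


section Aux2
variable {dd : ℕ}

lemma eval_aevalX (y : Fin dd → ℝ) (P : Polynomial ℝ) (u : Fin dd) :
    MvPolynomial.eval y (Polynomial.aeval (MvPolynomial.X u : MvPolynomial (Fin dd) ℝ) P)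
      = P.eval (y u) := by
  have h1 := Polynomial.aeval_algHom_apply
      (MvPolynomial.aeval y : MvPolynomial (Fin dd) ℝ →ₐ[ℝ] ℝ)
      (MvPolynomial.X u) P
  rw [MvPolynomial.aeval_X] at h1
  rw [← aeval_eq_eval, ← h1]
  rw [Polynomial.aeval_def]
  rfl

lemma degreeOf_aevalX_le (P : Polynomial ℝ) (u t : Fin dd) :
    MvPolynomial.degreeOf t (Polynomial.aeval (MvPolynomial.X u : MvPolynomial (Fin dd) ℝ) P)
      ≤ if u = t then P.natDegree else 0 := by
  classical
  rw [Polynomial.aeval_eq_sum_range]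
  refine le_trans (MvPolynomial.degreeOf_sum_le _ _ _) ?_
  apply Finset.sup_le
  intro k hk
  rw [Finset.mem_range] at hk
  rw [MvPolynomial.smul_eq_C_mul]
  refine le_trans (MvPolynomial.degreeOf_mul_le _ _ _) ?_
  rw [MvPolynomial.degreeOf_C, zero_add]
  refine le_trans (MvPolynomial.degreeOf_pow_le _ _ _) ?_
  by_cases hu : u = t
  · subst hu
    rw [if_pos rfl, MvPolynomial.degreeOf_X, if_pos rfl, mul_one]
    omega
  · rw [MvPolynomial.degreeOf_X, if_neg (fun hc => hu hc.symm), if_neg hu]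
    simp

lemma bij_iff_sum_single {α : Type*} [Fintype α] [DecidableEq α] (φ : α → Fin dd) :
    (∑ p : α, Finsupp.single (φ p) (1:ℕ)) = (∑ t : Fin dd, Finsupp.single t (1:ℕ))
      ↔ Function.Bijective φ := by
  classical
  have happ : ∀ t : Fin dd, (∑ p : α, Finsupp.single (φ p) (1:ℕ)) t
      = (Finset.univ.filter (fun p => φ p = t)).card := by
    intro t
    rw [Finsupp.finset_sum_apply, Finset.card_filter]
    apply Finset.sum_congr rfl
    intro p _
    rw [Finsupp.single_apply]
  have happ2 : ∀ t : Fin dd, (∑ t' : Fin dd, Finsupp.single t' (1:ℕ)) t = 1 := by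
    intro t
    rw [Finsupp.finset_sum_apply]
    have : ∀ t' ∈ (Finset.univ : Finset (Fin dd)), Finsupp.single t' (1:ℕ) t
        = if t' = t then 1 else 0 := fun t' _ => Finsupp.single_apply
    rw [Finset.sum_congr rfl this, Finset.sum_ite_eq' Finset.univ t (fun _ => 1),
      if_pos (Finset.mem_univ t)]
  constructor
  · intro heq
    have hcard : ∀ t, (Finset.univ.filter (fun p => φ p = t)).card = 1 := by
      intro t
      rw [← happ t, heq, happ2 t]
    constructor
    · intro p q hpq
      rcases Finset.card_eq_one.mp (hcard (φ p)) with ⟨w, hw⟩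
      have hp : p ∈ Finset.univ.filter (fun p' => φ p' = φ p) := by simp
      have hq : q ∈ Finset.univ.filter (fun p' => φ p' = φ p) := by simp [hpq]
      rw [hw, Finset.mem_singleton] at hp hq
      rw [hp, hq]
    · intro t
      have h2 : (Finset.univ.filter (fun p => φ p = t)).Nonempty := by
        rw [← Finset.card_pos, hcard t]; omega
      rcases h2 with ⟨p, hp⟩
      exact ⟨p, (Finset.mem_filter.mp hp).2⟩
  · intro hbij
    apply Finsupp.ext
    intro t
    rw [happ t, happ2 t, Finset.card_eq_one]
    rcases hbij.2 t with ⟨p, hp⟩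
    refine ⟨p, ?_⟩
    ext q
    simp only [Finset.mem_filter, Finset.mem_univ, true_and, Finset.mem_singleton]
    constructor
    · intro hq; exact hbij.1 (hq.trans hp.symm)
    · rintro rfl; exact hp

lemma sum_bijfun_eq_sum_equiv {α : Type*} [Fintype α] [DecidableEq α]
    (F : (α → Fin dd) → ℝ) :
    (∑ φ : α → Fin dd, if Function.Bijective φ then F φ else 0)
      = ∑ e : α ≃ Fin dd, F ⇑e := by
  classical
  rw [← Finset.sum_filter]
  refine Finset.sum_bij' (i := fun φ hφ => Equiv.ofBijective φ (by simpa using hφ))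
    (j := fun e _ => ⇑e) ?_ ?_ ?_ ?_ ?_
  · intro φ hφ
    exact Finset.mem_univ _
  · intro e _
    simp [e.bijective]
  · intro φ hφ
    rfl
  · intro e _
    exact Equiv.ext (fun p => rfl)
  · intro φ hφ
    rfl

lemma prod_X_eq_monomial {α : Type*} [Fintype α] (g : α → Fin dd) :
    (∏ p : α, (MvPolynomial.X (g p) : MvPolynomial (Fin dd) ℝ))
      = MvPolynomial.monomial (∑ p : α, Finsupp.single (g p) 1) 1 := by
  classical
  have haux : ∀ s : Finset α, (∏ p ∈ s, (MvPolynomial.X (g p) : MvPolynomial (Fin dd) ℝ))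
      = MvPolynomial.monomial (∑ p ∈ s, Finsupp.single (g p) 1) 1 := by
    intro s
    induction s using Finset.induction_on with
    | empty => simp
    | @insert a s ha ih =>
      rw [Finset.prod_insert ha, Finset.sum_insert ha, ih]
      rw [MvPolynomial.X, MvPolynomial.monomial_mul, mul_one]
  exact haux Finset.univ

lemma card_sigma_fiber {rr : ℕ} (e : Fin (rr+1) → ℕ) (i : Fin (rr+1)) :
    ((Finset.univ : Finset (Σ i' : Fin (rr+1), Fin (e i'))).filter (fun p => p.1 = i)).card
      = e i := by
  classical
  rw [Finset.card_filter]
  rw [← Finset.univ_sigma_univ, Finset.sum_sigma]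
  rw [Finset.sum_eq_single i]
  · simp
  · intro i' _ hne
    simp [hne]
  · intro hmem
    exact absurd (Finset.mem_univ i) hmem

end Aux2

end LowOrderAux



open LowOrderAux

/-- The action of a (possibly non-linear) differential operator of order at most `r`,
given by a polynomial `Q` in the variables `x, u_0, …, u_r` (variable `0` is `x`,
variable `i+1` is `u_i`), on a polynomial `f`: `T_Q[f] = Q(x, f, f', …, f^{(r)})`. -/
noncomputable def Tact {r : ℕ} (Q : MvPolynomial (Fin (r + 2)) ℝ) (f : Polynomial ℝ) :
    Polynomial ℝ :=
  MvPolynomial.aeval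
    (Fin.cases Polynomial.X (fun i : Fin (r + 1) => Polynomial.derivative^[(i : ℕ)] f)) Q

/-- If `2r < n` and the operator `T_Q` of order at most `r` maps every
polynomial of degree at most `n` to a polynomial of degree at most `n`, then every
monomial of `Q` has total degree at most `1` in the variables `u_0, …, u_r`:
the operator is necessarily linear. -/
theorem low_order_implies_linear (n r : ℕ) (hr : 2 * r < n)
    (Q : MvPolynomial (Fin (r + 2)) ℝ)
    (h : ∀ f : Polynomial ℝ, f.degree ≤ (n : WithBot ℕ) →
      (Tact Q f).degree ≤ (n : WithBot ℕ)) :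
    ∀ s ∈ Q.support, (∑ i : Fin (r + 1), s i.succ) ≤ 1 := by
  classical
  intro sstar hs
  by_contra hcon
  push_neg at hcon
  set d : ℕ := ∑ i : Fin (r+1), sstar i.succ with hd_def
  have hd : 2 ≤ d := hcon
  set wstar : ℕ := ∑ i : Fin (r+1), (i:ℕ) * sstar i.succ with hw_def
  set W : ℕ := wstar - sstar 0 with hW_def
  set cls : Finset (Fin (r+2) →₀ ℕ) := Q.support.filter (fun s : Fin (r+2) →₀ ℕ =>
      (∑ i : Fin (r+1), s i.succ = d) ∧
      (s 0 + wstar = sstar 0 + ∑ i : Fin (r+1), (i:ℕ) * s i.succ)) with hcls_def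
  set B : MvPolynomial (Fin d) ℝ := ∑ s ∈ cls, MvPolynomial.C (MvPolynomial.coeff s Q) *
      ∑ φ : ((Σ i : Fin (r+1), Fin (s i.succ)) ≃ Fin d),
        ∏ p : (Σ i : Fin (r+1), Fin (s i.succ)),
          Polynomial.aeval (MvPolynomial.X (φ p)) (descPochhammer ℝ ((p.1 : ℕ)))
      with hB_def
  -- sum of first components over the sigma type
  have hsig_sum : ∀ s : Fin (r+2) →₀ ℕ,
      (∑ p : (Σ i : Fin (r+1), Fin (s i.succ)), ((p.1 : ℕ)))
        = ∑ i : Fin (r+1), (i:ℕ) * s i.succ := by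
    intro s
    rw [← Finset.univ_sigma_univ, Finset.sum_sigma]
    apply Finset.sum_congr rfl
    intro i _
    dsimp only
    rw [Finset.sum_const, Finset.card_univ, Fintype.card_fin, smul_eq_mul, mul_comm]
  -- the evaluation of B at integer points
  have hEvalB : ∀ x : Fin d → ℕ, MvPolynomial.eval (fun t => ((x t : ℕ) : ℝ)) B
      = ∑ s ∈ cls, MvPolynomial.coeff s Q *
          ∑ φ : ((Σ i : Fin (r+1), Fin (s i.succ)) ≃ Fin d),
            ∏ p : (Σ i : Fin (r+1), Fin (s i.succ)),
              (((x (φ p)).descFactorial ((p.1 : ℕ)) : ℕ) : ℝ) := by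
    intro x
    rw [hB_def, map_sum]
    apply Finset.sum_congr rfl
    intro s _
    rw [map_mul, MvPolynomial.eval_C, map_sum]
    congr 1
    apply Finset.sum_congr rfl
    intro φ _
    rw [map_prod]
    apply Finset.prod_congr rfl
    intro p _
    rw [eval_aevalX, descPochhammer_eval_eq_descFactorial]
  -- degree bounds for B
  have hdegB : ∀ t, MvPolynomial.degreeOf t B ≤ r := by
    intro t
    rw [hB_def]
    refine le_trans (MvPolynomial.degreeOf_sum_le _ _ _) ?_
    apply Finset.sup_le
    intro s _
    refine le_trans (MvPolynomial.degreeOf_mul_le _ _ _) ?_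
    rw [MvPolynomial.degreeOf_C, zero_add]
    refine le_trans (MvPolynomial.degreeOf_sum_le _ _ _) ?_
    apply Finset.sup_le
    intro φ _
    refine le_trans (MvPolynomial.degreeOf_prod_le _ _ _) ?_
    have hbound : ∀ p : (Σ i : Fin (r+1), Fin (s i.succ)),
        MvPolynomial.degreeOf t
            (Polynomial.aeval (MvPolynomial.X (φ p) : MvPolynomial (Fin d) ℝ)
              (descPochhammer ℝ ((p.1:ℕ))))
          ≤ if φ p = t then ((p.1:ℕ)) else 0 := by
      intro p
      refine le_trans (degreeOf_aevalX_le _ _ _) ?_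
      rw [descPochhammer_natDegree]
    refine le_trans (Finset.sum_le_sum (fun p _ => hbound p)) ?_
    rw [Finset.sum_eq_single (φ.symm t)]
    · rw [if_pos (φ.apply_symm_apply t)]
      exact Fin.is_le _
    · intro p _ hp
      rw [if_neg]
      intro hc
      exact hp (by rw [← hc, Equiv.symm_apply_apply])
    · intro hmem
      exact absurd (Finset.mem_univ _) hmem
  -- region (A) : small total degree
  have hAreg : ∀ x : Fin d → ℕ, (∑ t, x t) < W →
      MvPolynomial.eval (fun t => ((x t : ℕ) : ℝ)) B = 0 := by
    intro x hx
    rw [hEvalB x]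
    apply Finset.sum_eq_zero
    intro s hscls
    have hw : W ≤ ∑ i : Fin (r+1), (i:ℕ) * s i.succ := by
      have := (Finset.mem_filter.mp hscls).2.2
      omega
    have hinner : ∀ φ : ((Σ i : Fin (r+1), Fin (s i.succ)) ≃ Fin d),
        (∏ p : (Σ i : Fin (r+1), Fin (s i.succ)),
          (((x (φ p)).descFactorial ((p.1:ℕ)) : ℕ):ℝ)) = 0 := by
      intro φ
      have hex : ∃ p : (Σ i : Fin (r+1), Fin (s i.succ)), x (φ p) < ((p.1:ℕ)) := by
        by_contra hno
        push_neg at hno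
        have h1 : (∑ p : (Σ i : Fin (r+1), Fin (s i.succ)), ((p.1:ℕ)))
            ≤ ∑ p, x (φ p) := Finset.sum_le_sum (fun p _ => hno p)
        rw [hsig_sum s, Equiv.sum_comp φ (fun t => x t)] at h1
        omega
      rcases hex with ⟨p, hp⟩
      apply Finset.prod_eq_zero (Finset.mem_univ p)
      rw [Nat.descFactorial_eq_zero_iff_lt.mpr hp]
      simp
    rw [Finset.sum_congr rfl (fun φ _ => hinner φ), Finset.sum_const_zero, mul_zero]
  -- region (B) : the probe computation
  have hBreg : ∀ x : Fin d → ℕ, (∀ t, x t ≤ n) → n + W < ∑ t, x t →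
      MvPolynomial.eval (fun t => ((x t : ℕ) : ℝ)) B = 0 := by
    intro j hjle hjsum
    set K : ℕ := (∑ t, j t + sstar 0) - wstar with hK_def
    have hKw : wstar ≤ ∑ t, j t + sstar 0 := by omega
    have hKn : n < K := by omega
    set Fg : Polynomial (MvPolynomial (Fin d) ℝ) :=
      ∑ t : Fin d, Polynomial.C (MvPolynomial.X t) * Polynomial.X ^ (j t) with hFg_def
    set v : Fin (r+2) → Polynomial (MvPolynomial (Fin d) ℝ) :=
      Fin.cases Polynomial.X (fun i : Fin (r+1) => Polynomial.derivative^[(i:ℕ)] Fg) with hv_def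
    set TQ : Polynomial (MvPolynomial (Fin d) ℝ) := MvPolynomial.aeval v Q with hTQ_def
    -- Step 1 : the coefficient of X^K in the generic image vanishes identically
    have hcoeffK : TQ.coeff K = 0 := by
      apply MvPolynomial.funext
      intro c
      rw [map_zero]
      set ec : MvPolynomial (Fin d) ℝ →ₐ[ℝ] ℝ := MvPolynomial.aeval c with hec_def
      set fc : Polynomial ℝ := ∑ t : Fin d, Polynomial.C (c t) * Polynomial.X ^ (j t) with hfc_def
      have hmapFg : Polynomial.map (ec : MvPolynomial (Fin d) ℝ →+* ℝ) Fg = fc := by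
        rw [hFg_def, hfc_def, Polynomial.map_sum]
        apply Finset.sum_congr rfl
        intro t _
        rw [Polynomial.map_mul, Polynomial.map_pow, Polynomial.map_C, Polynomial.map_X]
        congr 2
        exact MvPolynomial.aeval_X c t
      have hcomm : Polynomial.map (ec : MvPolynomial (Fin d) ℝ →+* ℝ) TQ = Tact Q fc := by
        rw [hTQ_def, Tact]
        have h1 := DFunLike.congr_fun
          (MvPolynomial.comp_aeval v (Polynomial.mapAlgHom ec)) Q
        simp only [AlgHom.coe_comp, Function.comp_apply] at h1
        rw [show Polynomial.map (ec : MvPolynomial (Fin d) ℝ →+* ℝ) (MvPolynomial.aeval v Q)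
            = Polynomial.mapAlgHom ec (MvPolynomial.aeval v Q) from rfl, h1]
        have hfun : (fun i => (Polynomial.mapAlgHom ec) (v i))
            = fun i : Fin (r+2) => Fin.cases Polynomial.X
                (fun i' : Fin (r+1) => Polynomial.derivative^[(i':ℕ)] fc) i := by
          funext i
          refine Fin.cases ?_ (fun i' => ?_) i
          · rw [hv_def]
            simp only [Fin.cases_zero]
            show Polynomial.map (ec : MvPolynomial (Fin d) ℝ →+* ℝ) Polynomial.X = _
            rw [Polynomial.map_X]
          · rw [hv_def]
            simp only [Fin.cases_succ]
            show Polynomial.map (ec : MvPolynomial (Fin d) ℝ →+* ℝ)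
                (Polynomial.derivative^[(i':ℕ)] Fg) = _
            rw [← Polynomial.iterate_derivative_map, hmapFg]
        rw [hfun]
      have hfdeg : fc.degree ≤ (n : WithBot ℕ) := by
        rw [hfc_def]
        refine le_trans (Polynomial.degree_sum_le _ _) ?_
        apply Finset.sup_le
        intro t _
        refine le_trans (Polynomial.degree_C_mul_X_pow_le _ _) ?_
        exact_mod_cast hjle t
      have hTK : (Tact Q fc).coeff K = 0 := by
        apply Polynomial.coeff_eq_zero_of_degree_lt
        refine lt_of_le_of_lt (h fc hfdeg) ?_
        exact_mod_cast hKn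
      have h2 : (Polynomial.map (ec : MvPolynomial (Fin d) ℝ →+* ℝ) TQ).coeff K = 0 := by
        rw [hcomm, hTK]
      rw [Polynomial.coeff_map] at h2
      rw [← aeval_eq_eval]
      exact h2
    -- Step 2 : extract the multilinear coefficient
    set χ : Fin d →₀ ℕ := ∑ t : Fin d, Finsupp.single t 1 with hχ_def
    -- the iterated derivative of the generic polynomial
    have hder : ∀ i : Fin (r+1), Polynomial.derivative^[(i:ℕ)] Fg
        = ∑ t : Fin d, Polynomial.C (MvPolynomial.X t *
            MvPolynomial.C (((j t).descFactorial ((i:ℕ)) : ℕ) : ℝ)) *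
            Polynomial.X ^ (j t - (i:ℕ)) := by
      intro i
      rw [hFg_def]
      have hsum : ∀ (k : ℕ), Polynomial.derivative^[k]
          (∑ t : Fin d, Polynomial.C (MvPolynomial.X t : MvPolynomial (Fin d) ℝ)
            * Polynomial.X ^ (j t))
          = ∑ t : Fin d, Polynomial.derivative^[k]
              (Polynomial.C (MvPolynomial.X t : MvPolynomial (Fin d) ℝ)
                * Polynomial.X ^ (j t)) := by
        intro k
        induction k with
        | zero => simp
        | succ k ih =>
          rw [Function.iterate_succ_apply', ih, Polynomial.derivative_sum]
          apply Finset.sum_congr rfl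
          intro t _
          rw [Function.iterate_succ_apply']
      rw [hsum]
      apply Finset.sum_congr rfl
      intro t _
      rw [Polynomial.iterate_derivative_C_mul, Polynomial.iterate_derivative_X_pow_eq_smul,
        Polynomial.smul_eq_C_mul]
      have hcst : (((j t).descFactorial ((i:ℕ)) : ℕ) : MvPolynomial (Fin d) ℝ)
          = MvPolynomial.C ((((j t).descFactorial ((i:ℕ)) : ℕ)) : ℝ) := by
        simp [map_natCast]
      rw [hcst, map_mul]
      ring
    -- the coefficient computation
    have hmain : MvPolynomial.coeff χ (TQ.coeff K)
        = ∑ s ∈ cls, MvPolynomial.coeff s Q *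
            ∑ φ : ((Σ i : Fin (r+1), Fin (s i.succ)) ≃ Fin d),
              ∏ p : (Σ i : Fin (r+1), Fin (s i.succ)),
                (((j (φ p)).descFactorial ((p.1:ℕ)) : ℕ) : ℝ) := by
      have hTQ2 : TQ = ∑ s ∈ Q.support,
          Polynomial.C (MvPolynomial.C (MvPolynomial.coeff s Q)) *
            ∏ i : Fin (r+2), v i ^ s i := by
        rw [hTQ_def, MvPolynomial.aeval_def, MvPolynomial.eval₂_eq']
        apply Finset.sum_congr rfl
        intro s _
        congr 1
      rw [hTQ2, Polynomial.finset_sum_coeff, MvPolynomial.coeff_sum]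
      have hpers : ∀ s ∈ Q.support,
          MvPolynomial.coeff χ ((Polynomial.C (MvPolynomial.C (MvPolynomial.coeff s Q)) *
              ∏ i : Fin (r+2), v i ^ s i).coeff K)
          = if ((∑ i : Fin (r+1), s i.succ = d) ∧
                (s 0 + wstar = sstar 0 + ∑ i : Fin (r+1), (i:ℕ) * s i.succ)) then
              MvPolynomial.coeff s Q *
                ∑ φ : ((Σ i : Fin (r+1), Fin (s i.succ)) ≃ Fin d),
                  ∏ p : (Σ i : Fin (r+1), Fin (s i.succ)),
                    (((j (φ p)).descFactorial ((p.1:ℕ)) : ℕ) : ℝ)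
            else 0 := by
        intro s hssup
        -- expand the product of powers
        have hprod : (∏ i : Fin (r+2), v i ^ s i)
            = Polynomial.X ^ (s 0) *
              ∏ i : Fin (r+1), (Polynomial.derivative^[(i:ℕ)] Fg) ^ (s i.succ) := by
          have h0 : v 0 = Polynomial.X := by
            rw [hv_def]
            simp only [Fin.cases_zero]
          have hSucc : ∀ i' : Fin (r+1), v i'.succ = Polynomial.derivative^[(i':ℕ)] Fg := by
            intro i'
            rw [hv_def]
            simp only [Fin.cases_succ]
          rw [Fin.prod_univ_succ, h0,
            Finset.prod_congr rfl (fun i (_ : i ∈ Finset.univ) => by rw [hSucc i])]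
        have hsigpow : (∏ i : Fin (r+1), (Polynomial.derivative^[(i:ℕ)] Fg) ^ (s i.succ))
            = ∏ p : (Σ i : Fin (r+1), Fin (s i.succ)),
                Polynomial.derivative^[((p.1:ℕ))] Fg := by
          rw [← Finset.univ_sigma_univ, Finset.prod_sigma]
          apply Finset.prod_congr rfl
          intro i _
          dsimp only
          rw [Finset.prod_const, Finset.card_univ, Fintype.card_fin]
        have hexp : (∏ p : (Σ i : Fin (r+1), Fin (s i.succ)),
              Polynomial.derivative^[((p.1:ℕ))] Fg)
            = ∑ φ ∈ Fintype.piFinset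
                (fun _ : (Σ i : Fin (r+1), Fin (s i.succ)) => (Finset.univ : Finset (Fin d))),
                ∏ p : (Σ i : Fin (r+1), Fin (s i.succ)),
                  Polynomial.C (MvPolynomial.X (φ p) *
                    MvPolynomial.C (((j (φ p)).descFactorial ((p.1:ℕ)) : ℕ) : ℝ)) *
                  Polynomial.X ^ (j (φ p) - ((p.1:ℕ))) := by
          rw [Finset.prod_congr rfl (fun p _ => hder p.1)]
          rw [Finset.prod_univ_sum]
        rw [hprod, hsigpow, hexp, Fintype.piFinset_univ]
        rw [Finset.mul_sum, Finset.mul_sum]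
        rw [Polynomial.finset_sum_coeff, MvPolynomial.coeff_sum]
        -- per φ computation
        have hφterm : ∀ φ : ((Σ i : Fin (r+1), Fin (s i.succ)) → Fin d),
            MvPolynomial.coeff χ
              ((Polynomial.C (MvPolynomial.C (MvPolynomial.coeff s Q)) *
                (Polynomial.X ^ (s 0) *
                  ∏ p : (Σ i : Fin (r+1), Fin (s i.succ)),
                    Polynomial.C (MvPolynomial.X (φ p) *
                      MvPolynomial.C (((j (φ p)).descFactorial ((p.1:ℕ)) : ℕ) : ℝ)) *
                    Polynomial.X ^ (j (φ p) - ((p.1:ℕ))))).coeff K)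
            = if Function.Bijective φ then
                (MvPolynomial.coeff s Q *
                  (∏ p : (Σ i : Fin (r+1), Fin (s i.succ)),
                    (((j (φ p)).descFactorial ((p.1:ℕ)) : ℕ) : ℝ)) *
                  (if K = s 0 + ∑ p : (Σ i : Fin (r+1), Fin (s i.succ)),
                      (j (φ p) - ((p.1:ℕ))) then 1 else 0))
              else 0 := by
          intro φ
          have hc1 : (∏ p : (Σ i : Fin (r+1), Fin (s i.succ)),
                Polynomial.C (MvPolynomial.X (φ p) *
                  MvPolynomial.C (((j (φ p)).descFactorial ((p.1:ℕ)) : ℕ) : ℝ)) *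
                Polynomial.X ^ (j (φ p) - ((p.1:ℕ))))
              = Polynomial.C (∏ p : (Σ i : Fin (r+1), Fin (s i.succ)),
                  (MvPolynomial.X (φ p) *
                    MvPolynomial.C (((j (φ p)).descFactorial ((p.1:ℕ)) : ℕ) : ℝ))) *
                Polynomial.X ^ (∑ p : (Σ i : Fin (r+1), Fin (s i.succ)),
                  (j (φ p) - ((p.1:ℕ)))) := by
            rw [Finset.prod_mul_distrib, map_prod, Finset.prod_pow_eq_pow_sum]
          rw [hc1]
          rw [show Polynomial.C (MvPolynomial.C (MvPolynomial.coeff s Q)) *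
              (Polynomial.X ^ (s 0) *
                (Polynomial.C (∏ p : (Σ i : Fin (r+1), Fin (s i.succ)),
                    (MvPolynomial.X (φ p) *
                      MvPolynomial.C (((j (φ p)).descFactorial ((p.1:ℕ)) : ℕ) : ℝ))) *
                  Polynomial.X ^ (∑ p : (Σ i : Fin (r+1), Fin (s i.succ)),
                    (j (φ p) - ((p.1:ℕ))))))
              = Polynomial.C (MvPolynomial.C (MvPolynomial.coeff s Q) *
                  ∏ p : (Σ i : Fin (r+1), Fin (s i.succ)),
                    (MvPolynomial.X (φ p) *
                      MvPolynomial.C (((j (φ p)).descFactorial ((p.1:ℕ)) : ℕ) : ℝ))) *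
                  Polynomial.X ^ (s 0 + ∑ p : (Σ i : Fin (r+1), Fin (s i.succ)),
                    (j (φ p) - ((p.1:ℕ)))) by
            rw [map_mul, pow_add]; ring]
          rw [Polynomial.coeff_C_mul, Polynomial.coeff_X_pow]
          rw [mul_ite, mul_one, mul_zero]
          rw [apply_ite (MvPolynomial.coeff χ), MvPolynomial.coeff_zero]
          -- inner coefficient
          have hc2 : MvPolynomial.coeff χ
              (MvPolynomial.C (MvPolynomial.coeff s Q) *
                ∏ p : (Σ i : Fin (r+1), Fin (s i.succ)),
                  (MvPolynomial.X (φ p) *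
                    MvPolynomial.C (((j (φ p)).descFactorial ((p.1:ℕ)) : ℕ) : ℝ)))
              = MvPolynomial.coeff s Q *
                ((∏ p : (Σ i : Fin (r+1), Fin (s i.succ)),
                    (((j (φ p)).descFactorial ((p.1:ℕ)) : ℕ) : ℝ)) *
                  (if Function.Bijective φ then 1 else 0)) := by
            rw [Finset.prod_mul_distrib]
            rw [← map_prod]
            rw [MvPolynomial.coeff_C_mul]
            congr 1
            rw [mul_comm (∏ p : (Σ i : Fin (r+1), Fin (s i.succ)),
                MvPolynomial.X (φ p)) _]
            rw [MvPolynomial.coeff_C_mul]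
            congr 1
            rw [prod_X_eq_monomial, MvPolynomial.coeff_monomial]
            rw [hχ_def]
            by_cases hbij : Function.Bijective φ
            · rw [if_pos ((bij_iff_sum_single φ).mpr hbij), if_pos hbij]
            · rw [if_neg (fun hc => hbij ((bij_iff_sum_single φ).mp hc)), if_neg hbij]
          rw [hc2]
          by_cases hbij : Function.Bijective φ <;>
            by_cases hKc : K = s 0 + ∑ p : (Σ i : Fin (r+1), Fin (s i.succ)),
                (j (φ p) - ((p.1:ℕ))) <;>
            simp [hbij, hKc]
        rw [Finset.sum_congr rfl (fun φ _ => hφterm φ)]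
        rw [sum_bijfun_eq_sum_equiv]
        -- now the case analysis on the class condition
        have harith : ∀ (φ : ((Σ i : Fin (r+1), Fin (s i.succ)) ≃ Fin d)),
            (∀ p : (Σ i : Fin (r+1), Fin (s i.succ)), ((p.1:ℕ)) ≤ j (φ p)) →
            ((∑ p : (Σ i : Fin (r+1), Fin (s i.succ)), (j (φ p) - ((p.1:ℕ))))
              = (∑ t, j t) - (∑ i : Fin (r+1), (i:ℕ) * s i.succ) ∧
             (∑ i : Fin (r+1), (i:ℕ) * s i.succ) ≤ ∑ t, j t) := by
          intro φ hall
          have h1 : (∑ p : (Σ i : Fin (r+1), Fin (s i.succ)), (j (φ p) - ((p.1:ℕ))))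
              = (∑ p : (Σ i : Fin (r+1), Fin (s i.succ)), j (φ p))
                - (∑ p : (Σ i : Fin (r+1), Fin (s i.succ)), ((p.1:ℕ))) :=
            Finset.sum_tsub_distrib Finset.univ (fun p _ => hall p)
          have h2 : (∑ p : (Σ i : Fin (r+1), Fin (s i.succ)), j (φ p)) = ∑ t, j t :=
            Equiv.sum_comp φ (fun t => j t)
          have h3 : (∑ p : (Σ i : Fin (r+1), Fin (s i.succ)), ((p.1:ℕ)))
              ≤ ∑ p : (Σ i : Fin (r+1), Fin (s i.succ)), j (φ p) :=
            Finset.sum_le_sum (fun p _ => hall p)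
          rw [h1, h2, hsig_sum s]
          rw [h2, hsig_sum s] at h3
          exact ⟨rfl, h3⟩
        by_cases hpredd : (∑ i : Fin (r+1), s i.succ = d) ∧
            (s 0 + wstar = sstar 0 + ∑ i : Fin (r+1), (i:ℕ) * s i.succ)
        · rw [if_pos hpredd, Finset.mul_sum]
          apply Finset.sum_congr rfl
          intro φ _
          by_cases hdf : (∏ p : (Σ i : Fin (r+1), Fin (s i.succ)),
              (((j (φ p)).descFactorial ((p.1:ℕ)) : ℕ) : ℝ)) = 0
          · rw [hdf]
            ring
          · have hall : ∀ p : (Σ i : Fin (r+1), Fin (s i.succ)), ((p.1:ℕ)) ≤ j (φ p) := by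
              intro p
              by_contra hlt
              push_neg at hlt
              apply hdf
              apply Finset.prod_eq_zero (Finset.mem_univ p)
              rw [Nat.descFactorial_eq_zero_iff_lt.mpr hlt]
              simp
            rcases harith φ hall with ⟨hsub, hle⟩
            have hKc : K = s 0 + ∑ p : (Σ i : Fin (r+1), Fin (s i.succ)),
                (j (φ p) - ((p.1:ℕ))) := by
              rw [hsub]
              have := hpredd.2
              omega
            rw [if_pos hKc]
            ring
        · rw [if_neg hpredd]
          apply Finset.sum_eq_zero
          intro φ _
          have hcards : (∑ i : Fin (r+1), s i.succ) = d := by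
            have hcc := Fintype.card_congr φ
            rw [Fintype.card_sigma] at hcc
            simpa using hcc
          have hclsfail : ¬ (s 0 + wstar = sstar 0 + ∑ i : Fin (r+1), (i:ℕ) * s i.succ) :=
            fun hc => hpredd ⟨hcards, hc⟩
          by_cases hdf : (∏ p : (Σ i : Fin (r+1), Fin (s i.succ)),
              (((j (φ p)).descFactorial ((p.1:ℕ)) : ℕ) : ℝ)) = 0
          · rw [hdf]
            ring
          · have hall : ∀ p : (Σ i : Fin (r+1), Fin (s i.succ)), ((p.1:ℕ)) ≤ j (φ p) := by
              intro p
              by_contra hlt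
              push_neg at hlt
              apply hdf
              apply Finset.prod_eq_zero (Finset.mem_univ p)
              rw [Nat.descFactorial_eq_zero_iff_lt.mpr hlt]
              simp
            rcases harith φ hall with ⟨hsub, hle⟩
            have hKc : ¬ (K = s 0 + ∑ p : (Σ i : Fin (r+1), Fin (s i.succ)),
                (j (φ p) - ((p.1:ℕ)))) := by
              rw [hsub]
              intro hc
              apply hclsfail
              omega
            rw [if_neg hKc]
            ring
      rw [Finset.sum_congr rfl hpers]
      rw [← Finset.sum_filter]
    rw [hEvalB j, ← hmain, hcoeffK, MvPolynomial.coeff_zero]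
  -- apply the core lemma
  have hB0 : B = 0 := by
    apply coreH d hd r n W W B le_rfl (by omega) hdegB
    · intro x hx
      exact hAreg x (by simpa using hx)
    · intro x hxle hxsum
      exact hBreg x hxle (by omega)
  -- extraction: all class coefficients vanish
  have hzero : ∀ (m : ℕ), ∀ s ∈ cls, (∑ i : Fin (r+1), (i:ℕ) * s i.succ) = m →
      MvPolynomial.coeff s Q = 0 := by
    intro m
    induction m using Nat.strong_induction_on with
    | _ m IHm =>
    intro s hscls hsw
    have hpred := (Finset.mem_filter.mp hscls).2
    have hcard : Fintype.card (Σ i : Fin (r+1), Fin (s i.succ)) = d := by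
      rw [Fintype.card_sigma]
      simp only [Fintype.card_fin]
      exact hpred.1
    set E := Fintype.equivFinOfCardEq hcard with hE
    set x : Fin d → ℕ := fun t => (((E.symm t).1 : ℕ)) with hx_def
    have hxsum : ∑ t, x t = m := by
      rw [hx_def]
      rw [Equiv.sum_comp E.symm (fun p : (Σ i : Fin (r+1), Fin (s i.succ)) => ((p.1 : ℕ)))]
      rw [hsig_sum s, hsw]
    have heval := congrArg (MvPolynomial.eval (fun t => ((x t : ℕ):ℝ))) hB0
    rw [hEvalB x, map_zero] at heval
    rw [Finset.sum_eq_single_of_mem s hscls ?side] at heval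
    case side =>
      intro s' hs'cls hne
      have hpred' := (Finset.mem_filter.mp hs'cls).2
      rcases lt_trichotomy (∑ i : Fin (r+1), (i:ℕ) * s' i.succ) m with hlt | heqw | hgt
      · rw [IHm _ hlt s' hs'cls rfl, zero_mul]
      · -- equal weight, different monomial: every term vanishes
        have hterm : ∀ φ : ((Σ i : Fin (r+1), Fin (s' i.succ)) ≃ Fin d),
            (∏ p : (Σ i : Fin (r+1), Fin (s' i.succ)),
              (((x (φ p)).descFactorial ((p.1:ℕ)) : ℕ):ℝ)) = 0 := by
          intro φ
          by_contra hnz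
          have hall : ∀ p : (Σ i : Fin (r+1), Fin (s' i.succ)), ((p.1:ℕ)) ≤ x (φ p) := by
            intro p
            by_contra hlt2
            push_neg at hlt2
            apply hnz
            apply Finset.prod_eq_zero (Finset.mem_univ p)
            rw [Nat.descFactorial_eq_zero_iff_lt.mpr hlt2]
            simp
          have hsums : (∑ p : (Σ i : Fin (r+1), Fin (s' i.succ)), ((p.1:ℕ)))
              = ∑ p, x (φ p) := by
            rw [hsig_sum s', Equiv.sum_comp φ (fun t => x t), hxsum, heqw]
          have hpteq : ∀ p : (Σ i : Fin (r+1), Fin (s' i.succ)), ((p.1:ℕ)) = x (φ p) :=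
            fun p => (Finset.sum_eq_sum_iff_of_le (fun p _ => hall p)).mp hsums p
              (Finset.mem_univ p)
          -- derive s' = s, contradiction
          apply hne
          have hfib : ∀ i : Fin (r+1), s' i.succ = s i.succ := by
            intro i
            have h1 : ((Finset.univ : Finset (Σ i' : Fin (r+1), Fin (s' i'.succ))).filter
                (fun p => p.1 = i)).card
                = ((Finset.univ : Finset (Fin d)).filter
                    (fun t => (E.symm t).1 = i)).card := by
              apply Finset.card_bij' (fun p _ => φ p) (fun t _ => φ.symm t)
              · intro p hp
                rw [Finset.mem_filter] at hp ⊢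
                refine ⟨Finset.mem_univ _, ?_⟩
                have h2 := hpteq p
                rw [hx_def] at h2
                have h3 : p.1 = (E.symm (φ p)).1 := Fin.val_injective h2
                rw [← h3, hp.2]
              · intro t ht
                rw [Finset.mem_filter] at ht ⊢
                refine ⟨Finset.mem_univ _, ?_⟩
                have h2 := hpteq (φ.symm t)
                rw [hx_def, Equiv.apply_symm_apply] at h2
                have h3 : (φ.symm t).1 = (E.symm t).1 := Fin.val_injective h2
                rw [h3, ht.2]
              · intro p _
                rw [Equiv.symm_apply_apply]
              · intro t _
                rw [Equiv.apply_symm_apply]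
            have h4 : ((Finset.univ : Finset (Fin d)).filter
                (fun t => (E.symm t).1 = i)).card
                = ((Finset.univ : Finset (Σ i' : Fin (r+1), Fin (s i'.succ))).filter
                    (fun p => p.1 = i)).card := by
              apply Finset.card_bij' (fun t _ => E.symm t) (fun p _ => E p)
              · intro t ht
                rw [Finset.mem_filter] at ht ⊢
                exact ⟨Finset.mem_univ _, ht.2⟩
              · intro p hp
                rw [Finset.mem_filter] at hp ⊢
                refine ⟨Finset.mem_univ _, ?_⟩
                rw [Equiv.symm_apply_apply, hp.2]
              · intro t _
                rw [Equiv.apply_symm_apply]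
              · intro p _
                rw [Equiv.symm_apply_apply]
            rw [← card_sigma_fiber (fun i' : Fin (r+1) => s' i'.succ) i,
              ← card_sigma_fiber (fun i' : Fin (r+1) => s i'.succ) i, h1, h4]
          apply Finsupp.ext
          intro a
          refine Fin.cases ?_ ?_ a
          · have h5 := hpred.2
            have h6 := hpred'.2
            omega
          · exact hfib
        rw [Finset.sum_congr rfl (fun φ _ => hterm φ), Finset.sum_const_zero, mul_zero]
      · -- larger weight : descFactorial vanishes
        have hterm : ∀ φ : ((Σ i : Fin (r+1), Fin (s' i.succ)) ≃ Fin d),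
            (∏ p : (Σ i : Fin (r+1), Fin (s' i.succ)),
              (((x (φ p)).descFactorial ((p.1:ℕ)) : ℕ):ℝ)) = 0 := by
          intro φ
          have hex : ∃ p : (Σ i : Fin (r+1), Fin (s' i.succ)), x (φ p) < ((p.1:ℕ)) := by
            by_contra hno
            push_neg at hno
            have h1 : (∑ p : (Σ i : Fin (r+1), Fin (s' i.succ)), ((p.1:ℕ)))
                ≤ ∑ p, x (φ p) := Finset.sum_le_sum (fun p _ => hno p)
            rw [hsig_sum s', Equiv.sum_comp φ (fun t => x t), hxsum] at h1
            omega
          rcases hex with ⟨p, hp⟩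
          apply Finset.prod_eq_zero (Finset.mem_univ p)
          rw [Nat.descFactorial_eq_zero_iff_lt.mpr hp]
          simp
        rw [Finset.sum_congr rfl (fun φ _ => hterm φ), Finset.sum_const_zero, mul_zero]
    -- heval : coeff * T = 0 with T > 0
    have hTpos : (0:ℝ) < ∑ φ : ((Σ i : Fin (r+1), Fin (s i.succ)) ≃ Fin d),
        ∏ p : (Σ i : Fin (r+1), Fin (s i.succ)),
          (((x (φ p)).descFactorial ((p.1:ℕ)) : ℕ):ℝ) := by
      apply Finset.sum_pos'
      · intro φ _
        apply Finset.prod_nonneg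
        intro p _
        positivity
      · refine ⟨E, Finset.mem_univ _, ?_⟩
        apply Finset.prod_pos
        intro p _
        have hxE : x (E p) = ((p.1:ℕ)) := by
          rw [hx_def]
          simp only [Equiv.symm_apply_apply]
        rw [hxE, Nat.descFactorial_self]
        have := Nat.factorial_pos ((p.1:ℕ))
        exact_mod_cast this
    rcases mul_eq_zero.mp heval with h1 | h1
    · exact h1
    · exact absurd h1 (ne_of_gt hTpos)
  have hstar_mem : sstar ∈ cls := by
    rw [hcls_def, Finset.mem_filter]
    exact ⟨hs, rfl, rfl⟩
  have := hzero wstar sstar hstar_mem rfl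
  exact (MvPolynomial.mem_support_iff.mp hs) this
end

section
/- Fix n ∈ ℕ. For f ∈ ℝ[x] and 0 ≤ j ≤ n define v_j[f] := Σ_{i=0}^{n−j} (−1)^i · (x^i / i!) · f^{(i+j)}; when f has degree at most n, v_j[f] is the constant polynomial equal to j! times the coefficient of x^j in f. Let Q be a nonzero real polynomial in the n + 2 variables x, w_0, …, w_n, and let m be the degree of Q in the variable x. Define T[f] := Q(x, v_0[f], v_1[f], …, v_n[f]). Then T[f] has degree at most m for every f of degree at most n, and there exists a polynomial f of degree at most n such that T[f] has degree exactly m; i.e., the operator T has deficiency exactly n − m relative to P_n. -/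
open Polynomial

/-- The operator dual `v_j[f] = ∑_{i=0}^{n−j} (−1)^i (x^i/i!) f^{(i+j)}`. -/
noncomputable def vOp (n j : ℕ) (f : ℝ[X]) : ℝ[X] :=
  ∑ i ∈ Finset.range (n - j + 1),
    C ((-1 : ℝ) ^ i / (i.factorial : ℝ)) * X ^ i * derivative^[i + j] f

/-- The operator `T[f] = Q(x, v_0[f], …, v_n[f])`, where `Q` is a polynomial in the
`n + 2` variables `x, w_0, …, w_n` (variable `0` is `x`, variable `j+1` is `w_j`). -/
noncomputable def TQ {n : ℕ} (Q : MvPolynomial (Fin (n + 2)) ℝ) (f : ℝ[X]) : ℝ[X] :=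
  MvPolynomial.aeval (Fin.cases X (fun j : Fin (n + 1) => vOp n (j : ℕ) f)) Q

private lemma vOp_eq_C {n j : ℕ} (hj : j ≤ n) {f : ℝ[X]} (hf : f.degree ≤ (n : WithBot ℕ)) :
    vOp n j f = C ((j.factorial : ℝ) * f.coeff j) := by
  have hnd : f.natDegree ≤ n := natDegree_le_iff_degree_le.mpr hf
  have htop : derivative^[n + 1] f = 0 :=
    iterate_derivative_eq_zero (lt_of_le_of_lt hnd (Nat.lt_succ_self n))
  set a : ℕ → ℝ[X] := fun i =>
    C ((-1 : ℝ) ^ i / (i.factorial : ℝ)) * X ^ i * derivative^[i + j] f with ha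
  set u : ℕ → ℝ[X] := fun i =>
    C ((-1 : ℝ) ^ i / (i.factorial : ℝ)) * X ^ i * derivative^[i + j + 1] f with hu
  have hzero : derivative (a 0) = u 0 := by
    simp [ha, hu, Function.iterate_succ_apply']
  have hstep : ∀ k, derivative (a (k + 1)) = u (k + 1) - u k := by
    intro k
    have hconst : ((-1 : ℝ) ^ (k + 1) / ((k + 1).factorial : ℝ)) * (((k + 1 : ℕ)) : ℝ)
        = -((-1 : ℝ) ^ k / (k.factorial : ℝ)) := by
      have h1 : (((k + 1).factorial : ℕ) : ℝ) = ((k : ℝ) + 1) * (k.factorial : ℝ) := by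
        push_cast [Nat.factorial_succ]; ring
      have h2 : (k.factorial : ℝ) ≠ 0 := by positivity
      have h3 : ((k : ℝ) + 1) ≠ 0 := by positivity
      rw [h1]
      field_simp
      push_cast
      ring
    have hg : derivative (derivative^[k + 1 + j] f) = derivative^[k + 1 + j + 1] f :=
      (Function.iterate_succ_apply' _ _ _).symm
    have hidx : k + j + 1 = k + 1 + j := by omega
    simp only [ha, hu]
    rw [derivative_mul, derivative_mul, derivative_C, zero_mul, zero_add,
      derivative_X_pow, hg]
    have key : C ((-1 : ℝ) ^ (k + 1) / ((k + 1).factorial : ℝ)) *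
        (C (((k + 1 : ℕ)) : ℝ) * X ^ (k + 1 - 1)) =
        -(C ((-1 : ℝ) ^ k / (k.factorial : ℝ)) * X ^ k) := by
      rw [Nat.add_sub_cancel, ← mul_assoc, ← C_mul, hconst, map_neg, neg_mul]
    rw [key, hidx]
    ring
  have hsum : ∀ N, (∑ i ∈ Finset.range (N + 1), derivative (a i)) = u N := by
    intro N
    induction N with
    | zero => simpa using hzero
    | succ N ih =>
        rw [Finset.sum_range_succ, ih, hstep]
        abel
  have hder : derivative (vOp n j f) = 0 := by
    have h1 : derivative (vOp n j f) = ∑ i ∈ Finset.range (n - j + 1), derivative (a i) := by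
      rw [vOp, derivative_sum]
    rw [h1, hsum]
    have hNj : n - j + j + 1 = n + 1 := by omega
    simp only [hu, hNj, htop, mul_zero]
  rw [eq_C_of_derivative_eq_zero hder]
  congr 1
  have h2 : vOp n j f = ∑ i ∈ Finset.range (n - j + 1), a i := rfl
  rw [h2, finset_sum_coeff]
  have hmem : (0 : ℕ) ∈ Finset.range (n - j + 1) := Finset.mem_range.mpr (Nat.succ_pos _)
  have h3 : (∑ i ∈ Finset.range (n - j + 1), (a i).coeff 0)
      = ∑ i ∈ Finset.range (n - j + 1),
          (if i = 0 then (derivative^[j] f).coeff 0 else 0) := by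
    refine Finset.sum_congr rfl fun i _ => ?_
    simp only [ha]
    rw [mul_coeff_zero, mul_coeff_zero, coeff_C, coeff_X_pow]
    cases i with
    | zero => simp
    | succ k => simp
  rw [h3, Finset.sum_ite_eq' (Finset.range (n - j + 1)) 0
      (fun _ => (derivative^[j] f).coeff 0), if_pos hmem]
  rw [coeff_iterate_derivative, zero_add, Nat.descFactorial_self, nsmul_eq_mul]

private lemma aeval_cases_eq {n : ℕ} (c : Fin (n + 1) → ℝ) (Q : MvPolynomial (Fin (n + 2)) ℝ) :
    MvPolynomial.aeval (Fin.cases X (fun j : Fin (n + 1) => (C (c j) : ℝ[X]))) Q =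
      Polynomial.map (MvPolynomial.eval c) (MvPolynomial.finSuccEquiv ℝ (n + 1) Q) := by
  have key : (MvPolynomial.aeval
        (Fin.cases X (fun j : Fin (n + 1) => (C (c j) : ℝ[X]))) :
        MvPolynomial (Fin (n + 2)) ℝ →ₐ[ℝ] ℝ[X]) =
      (Polynomial.mapAlgHom (MvPolynomial.aeval c)).comp
        (MvPolynomial.finSuccEquiv ℝ (n + 1)).toAlgHom := by
    apply MvPolynomial.algHom_ext
    intro i
    refine Fin.cases ?_ (fun j => ?_) i
    · simp [MvPolynomial.finSuccEquiv_X_zero]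
    · simp [MvPolynomial.finSuccEquiv_X_succ]
  have := DFunLike.congr_fun key Q
  rw [this]
  simp only [AlgHom.coe_comp, Function.comp_apply, AlgEquiv.toAlgHom_eq_coe,
    AlgHom.coe_coe, coe_mapAlgHom]
  congr 1

private lemma TQ_eq {n : ℕ} (Q : MvPolynomial (Fin (n + 2)) ℝ) {f : ℝ[X]}
    (hf : f.degree ≤ (n : WithBot ℕ)) :
    TQ Q f = Polynomial.map
      (MvPolynomial.eval (fun j : Fin (n + 1) => (((j : ℕ).factorial : ℝ) * f.coeff (j : ℕ))))
      (MvPolynomial.finSuccEquiv ℝ (n + 1) Q) := by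
  rw [TQ]
  have h : (Fin.cases X (fun j : Fin (n + 1) => vOp n (j : ℕ) f) : Fin (n + 2) → ℝ[X]) =
      Fin.cases X (fun j : Fin (n + 1) =>
        (C (((j : ℕ).factorial : ℝ) * f.coeff (j : ℕ)) : ℝ[X])) := by
    funext i
    refine Fin.cases rfl (fun j => ?_) i
    simp only [Fin.cases_succ]
    exact vOp_eq_C (Nat.lt_succ_iff.mp j.isLt) hf
  rw [h, aeval_cases_eq]

/-- On `P_n` the `v_j` produce constants (`v_j[f] = j!·coeff_j f`);
for a nonzero `Q` with `x`-degree `m`, the operator `T[f] = Q(x, v_0[f], …, v_n[f])`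
maps `P_n` into `P_m` and attains degree exactly `m` on some `f ∈ P_n`: it has
deficiency exactly `n − m` relative to `P_n`. -/
theorem deficiency_from_x_degree (n : ℕ) (Q : MvPolynomial (Fin (n + 2)) ℝ)
    (hQ : Q ≠ 0) (m : ℕ) (hm : m = MvPolynomial.degreeOf 0 Q) :
    (∀ f : ℝ[X], f.degree ≤ (n : WithBot ℕ) → ∀ j ≤ n,
      vOp n j f = C ((j.factorial : ℝ) * f.coeff j)) ∧
    (∀ f : ℝ[X], f.degree ≤ (n : WithBot ℕ) → (TQ Q f).degree ≤ (m : WithBot ℕ)) ∧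
    (∃ f : ℝ[X], f.degree ≤ (n : WithBot ℕ) ∧ (TQ Q f).degree = (m : WithBot ℕ)) := by
  set P : Polynomial (MvPolynomial (Fin (n + 1)) ℝ) := MvPolynomial.finSuccEquiv ℝ (n + 1) Q
    with hP
  have hPnd : P.natDegree = m := by
    rw [hP, MvPolynomial.natDegree_finSuccEquiv, hm]
  have hdegle : ∀ f : ℝ[X], f.degree ≤ (n : WithBot ℕ) → (TQ Q f).degree ≤ (m : WithBot ℕ) := by
    intro f hf
    rw [TQ_eq Q hf]
    refine le_trans (degree_map_le) ?_
    calc P.degree ≤ (P.natDegree : WithBot ℕ) := degree_le_natDegree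
      _ = (m : WithBot ℕ) := by rw [hPnd]
  refine ⟨fun f hf j hj => vOp_eq_C hj hf, hdegle, ?_⟩
  -- existence
  have hP0 : P ≠ 0 := by
    intro h
    rw [hP] at h
    apply hQ
    have h2 := congrArg (MvPolynomial.finSuccEquiv ℝ (n + 1)).symm h
    simpa using h2
  have hcoeff : P.coeff m ≠ 0 := by
    rw [← hPnd, coeff_natDegree]
    exact leadingCoeff_ne_zero.mpr hP0
  have hex : ∃ c : Fin (n + 1) → ℝ, MvPolynomial.eval c (P.coeff m) ≠ 0 := by
    by_contra hcon
    push_neg at hcon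
    exact hcoeff (MvPolynomial.funext fun c => by simp [hcon c])
  obtain ⟨c, hc⟩ := hex
  set d : ℕ → ℝ := fun i => if h : i < n + 1 then c ⟨i, h⟩ / (i.factorial : ℝ) else 0 with hd
  set f : ℝ[X] := ∑ i ∈ Finset.range (n + 1), monomial i (d i) with hf
  have hfd : f.degree ≤ (n : WithBot ℕ) := by
    refine le_trans (degree_sum_le _ _) ?_
    refine Finset.sup_le fun i hi => ?_
    refine le_trans (degree_monomial_le _ _) ?_
    exact_mod_cast Nat.lt_succ_iff.mp (Finset.mem_range.mp hi)
  have hfc : ∀ j : Fin (n + 1), f.coeff (j : ℕ) = c j / ((j : ℕ).factorial : ℝ) := by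
    intro j
    rw [hf, finset_sum_coeff]
    have h4 : (∑ i ∈ Finset.range (n + 1), (monomial i (d i)).coeff (j : ℕ))
        = ∑ i ∈ Finset.range (n + 1), (if i = (j : ℕ) then d i else 0) :=
      Finset.sum_congr rfl fun i _ => coeff_monomial
    rw [h4, Finset.sum_ite_eq' (Finset.range (n + 1)) (j : ℕ) d,
      if_pos (Finset.mem_range.mpr j.isLt), hd]
    simp only [j.isLt, dif_pos, Fin.eta]
  have hcf : (fun j : Fin (n + 1) => (((j : ℕ).factorial : ℝ) * f.coeff (j : ℕ))) = c := by
    funext j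
    rw [hfc j]
    have : ((j : ℕ).factorial : ℝ) ≠ 0 := by positivity
    field_simp
  refine ⟨f, hfd, ?_⟩
  refine le_antisymm (hdegle f hfd) ?_
  refine le_degree_of_ne_zero ?_
  rw [TQ_eq Q hfd, hcf, coeff_map, ← hP]
  exact hc
end

section
/- Let n ≥ 1 and let f ∈ ℝ[x] have degree exactly n, so that f^{(n)} is a nonzero constant c. Set ξ := f^{(n−1)} / c ∈ ℝ[x] (a polynomial of degree 1). Then for every 0 ≤ j ≤ n the polynomial I_{n−j}[f] := Σ_{i=0}^{n−j} (−1)^i · (ξ^i / i!) · f^{(i+j)} is a constant polynomial (has degree at most 0). In particular I_0[f] = c and I_1[f] = 0; thus the autonomous non-linear operators I_2, …, I_n have maximal deficiency n, transforming every polynomial of degree exactly n into a constant. -/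
open Polynomial

/-- Let `f` have degree exactly `n ≥ 1`, so `f^{(n)} = C c` with
`c ≠ 0`, and set `ξ := f^{(n−1)}/c`.  Then every
`I_{n−j}[f] = ∑_{i=0}^{n−j} (−1)^i (ξ^i/i!) f^{(i+j)}` (`0 ≤ j ≤ n`) is a constant
polynomial; in particular `I_0[f] = c` and `I_1[f] = 0`. -/
theorem autonomous_maximal_deficiency (n : ℕ) (hn : 1 ≤ n) (f : ℝ[X])
    (hf : f.degree = (n : WithBot ℕ))
    (c : ℝ) (hc : derivative^[n] f = C c)
    (ξ : ℝ[X]) (hξ : ξ = C c⁻¹ * derivative^[n - 1] f)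
    (Ip : ℕ → ℝ[X])
    (hIp : ∀ j, Ip j = ∑ i ∈ Finset.range (n - j + 1),
      C ((-1 : ℝ) ^ i / (i.factorial : ℝ)) * ξ ^ i * derivative^[i + j] f) :
    (∀ j ≤ n, (Ip j).degree ≤ (0 : WithBot ℕ)) ∧ Ip n = C c ∧ Ip (n - 1) = 0 := by
  have hnat : f.natDegree = n := natDegree_eq_of_degree_eq_some hf
  have hfne : f ≠ 0 := fun h => by simp [h] at hf
  -- c ≠ 0
  have hcoeffn : f.coeff n ≠ 0 := by
    rw [← hnat]; exact leadingCoeff_ne_zero.mpr hfne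
  have hc0 : c ≠ 0 := by
    have h0 := coeff_iterate_derivative f (k := n) 0
    rw [hc] at h0
    simp only [coeff_C, eq_self_iff_true, if_true, zero_add, nsmul_eq_mul,
      Nat.descFactorial_self] at h0
    intro h
    rw [h] at h0
    exact hcoeffn ((mul_eq_zero.mp h0.symm).resolve_left
      (Nat.cast_ne_zero.mpr n.factorial_ne_zero))
  -- derivative of ξ is 1
  have hdn1 : derivative^[n+1] f = 0 := by
    rw [Function.iterate_succ_apply', hc, derivative_C]
  have hξ' : derivative ξ = 1 := by
    rw [hξ, derivative_mul, derivative_C, zero_mul, zero_add,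
      ← Function.iterate_succ_apply' derivative (n-1) f, Nat.succ_eq_add_one, Nat.sub_add_cancel hn, hc, ← C_mul,
      inv_mul_cancel₀ hc0, C_1]
  -- derivative of each Ip j vanishes
  have key : ∀ j ≤ n, derivative (Ip j) = 0 := by
    intro j hj
    set B : ℕ → ℝ[X] := fun i =>
      C ((-1 : ℝ) ^ i / (i.factorial : ℝ)) * ξ ^ i * derivative^[i + j + 1] f with hB
    have step : ∀ i : ℕ,
        derivative (C ((-1 : ℝ) ^ (i+1) / ((i+1).factorial : ℝ)) * ξ ^ (i+1)
          * derivative^[(i+1) + j] f) = B (i+1) - B i := by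
      intro i
      have h0 : (i.factorial : ℝ) ≠ 0 := Nat.cast_ne_zero.mpr i.factorial_ne_zero
      have hco : ((-1 : ℝ) ^ (i+1) / ((i+1).factorial : ℝ)) * ((i+1 : ℕ) : ℝ)
          = -((-1 : ℝ) ^ i / (i.factorial : ℝ)) := by
        rw [Nat.factorial_succ]
        push_cast
        field_simp
        ring
      rw [derivative_mul, derivative_mul, derivative_C, zero_mul, zero_add,
        derivative_pow, hξ', mul_one, ← Function.iterate_succ_apply' derivative]
      simp only [Nat.add_sub_cancel]
      have : C ((-1 : ℝ) ^ (i+1) / ((i+1).factorial : ℝ)) * (C ((i+1 : ℕ) : ℝ) * ξ ^ i)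
          = -(C ((-1 : ℝ) ^ i / (i.factorial : ℝ)) * ξ ^ i) := by
        rw [← mul_assoc, ← C_mul, hco, map_neg, neg_mul]
      push_cast at this ⊢
      rw [this]
      simp only [hB]
      have hidx : (i + 1 + j) + 1 = (i + 1) + j + 1 := by ring
      rw [hidx]
      have hidx2 : i + 1 + j = i + j + 1 := by ring
      rw [hidx2]
      ring
    rw [hIp j, derivative_sum, Finset.sum_range_succ']
    have hterm : ∀ i ∈ Finset.range (n - j),
        derivative (C ((-1 : ℝ) ^ (i+1) / ((i+1).factorial : ℝ)) * ξ ^ (i+1)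
          * derivative^[(i+1) + j] f) = B (i+1) - B i := fun i _ => step i
    rw [Finset.sum_congr rfl hterm, Finset.sum_range_sub]
    have h00 : derivative (C ((-1 : ℝ) ^ 0 / ((0:ℕ).factorial : ℝ)) * ξ ^ 0
        * derivative^[0 + j] f) = B 0 := by
      simp only [pow_zero, Nat.factorial_zero, Nat.cast_one, div_one, map_one, one_mul,
        zero_add, hB]
      rw [← Function.iterate_succ_apply' derivative]
    rw [h00]
    have hBN : B (n - j) = 0 := by
      have : n - j + j + 1 = n + 1 := by omega
      simp only [hB, this, hdn1, mul_zero]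
    rw [hBN]
    ring
  -- degree bound
  have hdeg : ∀ j ≤ n, (Ip j).degree ≤ (0 : WithBot ℕ) := by
    intro j hj
    have := eq_C_of_natDegree_eq_zero (natDegree_eq_zero_of_derivative_eq_zero (key j hj))
    rw [this]
    exact degree_C_le
  refine ⟨hdeg, ?_, ?_⟩
  · rw [hIp n]
    simp [hc]
  · rw [hIp (n-1)]
    have h1 : n - (n - 1) = 1 := by omega
    rw [h1]
    rw [Finset.sum_range_succ, Finset.sum_range_one]
    have h2 : 1 + (n - 1) = n := by omega
    simp only [pow_zero, Nat.factorial_zero, Nat.cast_one, div_one, map_one, one_mul,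
      zero_add, pow_one, Nat.factorial_one, h2, hc, hξ, map_neg]
    have hcc : (C c⁻¹ : ℝ[X]) * C c = 1 := by
      rw [← C_mul, inv_mul_cancel₀ hc0, C_1]
    linear_combination (-(derivative^[n-1] f)) * hcc
end

section
/- Fix n ≥ 1 and an integer k with −n ≤ k ≤ n, and set r_min := ⌈(n+k)/2⌉, r_max := min(n, n+k). In the polynomial ring ℝ[u_0, u_1, …, u_n], let Q_k denote the linear span of the monomials { u_i · u_j : i + j = n + k, 0 ≤ i ≤ j ≤ n }, which has dimension ⌊(n − |k|)/2⌋ + 1. For each r with r_min ≤ r ≤ r_max define Q_{k,r} := Σ_{i=n+k−r}^{r} (−1)^i · C(i−k+1, n−r+1) · C(n−i, n−r) · u_i · u_{n+k−i}. Then the family { Q_{k,r} : r_min ≤ r ≤ r_max } is a basis of the vector space Q_k; in particular these polynomials are ℝ-linearly independent and r_max − r_min + 1 = ⌊(n − |k|)/2⌋ + 1. -/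
open MvPolynomial Finsupp
open Fin.NatCast

/-- exponent vector of the monomial `u_j u_{t-j}` -/
noncomputable def dExp (n t j : ℕ) : Fin (n+1) →₀ ℕ :=
  Finsupp.single ((j : ℕ) : Fin (n+1)) 1 + Finsupp.single (((t - j : ℕ)) : Fin (n+1)) 1

/-- the monomial `u_j u_{t-j}` -/
noncomputable def eMon (n t j : ℕ) : MvPolynomial (Fin (n+1)) ℝ :=
  MvPolynomial.monomial (dExp n t j) 1

lemma aux_XX {n : ℕ} (a b : Fin (n+1)) :
    (MvPolynomial.X a : MvPolynomial (Fin (n+1)) ℝ) * MvPolynomial.X b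
      = MvPolynomial.monomial (Finsupp.single a 1 + Finsupp.single b 1) 1 := by
  rw [← pow_one (MvPolynomial.X a), ← pow_one (MvPolynomial.X b),
    MvPolynomial.X_pow_eq_monomial, MvPolynomial.X_pow_eq_monomial,
    MvPolynomial.monomial_mul, mul_one]

lemma aux_term {n t : ℕ} (i : ℕ) (h1 : i ≤ t) :
    (MvPolynomial.X ((i : ℕ) : Fin (n+1)) : MvPolynomial (Fin (n+1)) ℝ)
        * MvPolynomial.X (((t - i : ℕ)) : Fin (n+1)) = eMon n t (min i (t - i)) := by
  rcases le_total i (t - i) with h | h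
  · rw [min_eq_left h, aux_XX]; rfl
  · rw [min_eq_right h, aux_XX, eMon, dExp]
    have h2 : t - (t - i) = i := by omega
    rw [h2]
    exact congrArg (fun z => MvPolynomial.monomial z (1:ℝ)) (add_comm _ _)

lemma aux_dExp_apply {n t : ℕ} (j : ℕ) (x : Fin (n+1)) :
    dExp n t j x = (if ((j : ℕ) : Fin (n+1)) = x then 1 else 0)
      + (if (((t - j : ℕ)) : Fin (n+1)) = x then 1 else 0) := by
  rw [dExp, Finsupp.add_apply, Finsupp.single_apply, Finsupp.single_apply]

lemma aux_inj {n t : ℕ} {j1 j2 : ℕ} (hj1 : j1 ≤ n) (hj2 : j2 ≤ n)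
    (h1 : j1 ≤ t - j1) (h2 : j2 ≤ t - j2) (h2n : t - j2 ≤ n)
    (hEq : dExp n t j1 = dExp n t j2) : j1 = j2 := by
  by_contra hne
  wlog hlt : j1 < j2 generalizing j1 j2
  · exact this hj2 hj1 h2 h1 (by omega) hEq.symm (Ne.symm hne) (by omega)
  have hv := DFunLike.congr_fun hEq ((j1 : ℕ) : Fin (n+1))
  rw [aux_dExp_apply, aux_dExp_apply, if_pos rfl] at hv
  have hne1 : ((j2 : ℕ) : Fin (n+1)) ≠ ((j1 : ℕ) : Fin (n+1)) := by
    intro h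
    have := congrArg Fin.val h
    rw [Fin.val_cast_of_lt (by omega), Fin.val_cast_of_lt (by omega)] at this
    omega
  have hne2 : (((t - j2 : ℕ)) : Fin (n+1)) ≠ ((j1 : ℕ) : Fin (n+1)) := by
    intro h
    have := congrArg Fin.val h
    rw [Fin.val_cast_of_lt (by omega), Fin.val_cast_of_lt (by omega)] at this
    omega
  rw [if_neg hne1, if_neg hne2] at hv
  split at hv <;> omega

noncomputable def cCoef (n r : ℕ) (k : ℤ) (i : ℕ) : ℝ :=
  (-1 : ℝ) ^ i * ((((i : ℤ) - k + 1).toNat.choose (n - r + 1) : ℕ) : ℝ) *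
    (((n - i).choose (n - r) : ℕ) : ℝ)

lemma aux_c1 {n t r : ℕ} {k : ℤ} (ht : (t : ℤ) = (n : ℤ) + k)
    (h1 : r ≤ n) (h2 : r ≤ t) (h3 : t ≤ n + r) :
    cCoef n r k (t - r) = (-1 : ℝ) ^ (t - r) * (((n + r - t).choose (n - r) : ℕ) : ℝ) := by
  rw [cCoef]
  have e1 : (((t - r : ℕ) : ℤ) - k + 1).toNat = n - r + 1 := by omega
  have e2 : n - (t - r) = n + r - t := by omega
  rw [e1, e2, Nat.choose_self, Nat.cast_one, mul_one]

lemma aux_c2 {n t r : ℕ} {k : ℤ} (ht : (t : ℤ) = (n : ℤ) + k)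
    (h1 : r ≤ n) (h3 : t ≤ n + r) :
    cCoef n r k r = (-1 : ℝ) ^ r * (((n + r - t + 1).choose (n - r + 1) : ℕ) : ℝ) := by
  rw [cCoef]
  have e1 : (((r : ℕ) : ℤ) - k + 1).toNat = n + r - t + 1 := by omega
  rw [e1, Nat.choose_self, Nat.cast_one, mul_one]

lemma aux_cself {n t r : ℕ} {k : ℤ} (ht : (t : ℤ) = (n : ℤ) + k)
    (h1 : r ≤ n) (h2 : t = 2 * r) :
    cCoef n r k r = (-1 : ℝ) ^ r := by
  rw [aux_c2 ht h1 (by omega)]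
  have e1 : n + r - t + 1 = n - r + 1 := by omega
  rw [e1, Nat.choose_self, Nat.cast_one, mul_one]

lemma aux_diag_ne {n t r : ℕ} {k : ℤ} (ht : (t : ℤ) = (n : ℤ) + k)
    (h1 : r ≤ n) (h2 : t < 2 * r) (h3 : t ≤ n + r) (h4 : r ≤ t) :
    cCoef n r k (t - r) + cCoef n r k r ≠ 0 := by
  rw [aux_c1 ht h1 h4 h3, aux_c2 ht h1 h3]
  have hsign : (-1 : ℝ) ^ (t - r) = (-1 : ℝ) ^ t * (-1 : ℝ) ^ r := by
    have ha : (-1 : ℝ) ^ (t - r) * (-1 : ℝ) ^ r = (-1 : ℝ) ^ t := by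
      rw [← pow_add]; congr 1; omega
    have hb : ((-1 : ℝ) ^ r) * ((-1 : ℝ) ^ r) = 1 := by
      rw [← mul_pow]; norm_num
    calc (-1 : ℝ) ^ (t - r) = (-1 : ℝ) ^ (t - r) * (((-1 : ℝ) ^ r) * ((-1 : ℝ) ^ r)) := by
          rw [hb, mul_one]
      _ = (-1 : ℝ) ^ t * (-1 : ℝ) ^ r := by rw [← mul_assoc, ha]
  rcases Nat.even_or_odd t with hev | hod
  · have key : (-1 : ℝ) ^ (t - r) * (((n + r - t).choose (n - r) : ℕ) : ℝ)
        + (-1 : ℝ) ^ r * (((n + r - t + 1).choose (n - r + 1) : ℕ) : ℝ)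
        = (-1 : ℝ) ^ r * ((((n + r - t).choose (n - r) : ℕ) : ℝ)
            + (((n + r - t + 1).choose (n - r + 1) : ℕ) : ℝ)) := by
      rw [hsign, hev.neg_one_pow]; ring
    rw [key]
    refine mul_ne_zero (pow_ne_zero _ (by norm_num)) (ne_of_gt ?_)
    have hpos : 0 < (n + r - t + 1).choose (n - r + 1) :=
      Nat.choose_pos (by omega)
    have : (0 : ℝ) < (((n + r - t + 1).choose (n - r + 1) : ℕ) : ℝ) := by
      exact_mod_cast hpos
    have h0 : (0 : ℝ) ≤ (((n + r - t).choose (n - r) : ℕ) : ℝ) := Nat.cast_nonneg _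
    linarith
  · have hpascal : (n + r - t + 1).choose (n - r + 1)
        = (n + r - t).choose (n - r) + (n + r - t).choose (n - r + 1) :=
      Nat.choose_succ_succ' _ _
    have key : (-1 : ℝ) ^ (t - r) * (((n + r - t).choose (n - r) : ℕ) : ℝ)
        + (-1 : ℝ) ^ r * (((n + r - t + 1).choose (n - r + 1) : ℕ) : ℝ)
        = (-1 : ℝ) ^ r * (((n + r - t).choose (n - r + 1) : ℕ) : ℝ) := by
      rw [hsign, hod.neg_one_pow, hpascal]; push_cast; ring
    rw [key]
    refine mul_ne_zero (pow_ne_zero _ (by norm_num)) ?_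
    have hpos : 0 < (n + r - t).choose (n - r + 1) := Nat.choose_pos (by omega)
    exact_mod_cast hpos.ne'

/-- Fix `n ≥ 1` and `−n ≤ k ≤ n`; let `t = n + k`,
`r_min = ⌈(n+k)/2⌉`, `r_max = min(n, n+k)`.  In `ℝ[u_0, …, u_n]`, let `Q_k` be the span
of the monomials `u_i u_j` with `i + j = n + k`, `0 ≤ i ≤ j ≤ n`, and for
`r_min ≤ r ≤ r_max` let
`Q_{k,r} = ∑_{i=n+k−r}^{r} (−1)^i C(i−k+1, n−r+1) C(n−i, n−r) u_i u_{n+k−i}`.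
Then the `Q_{k,r}` belong to `Q_k`, form a linearly independent family spanning `Q_k`
(a basis), and `dim Q_k = ⌊(n−|k|)/2⌋ + 1 = r_max − r_min + 1`. -/
theorem Qkr_basis (n : ℕ) (hn : 1 ≤ n)
    (k : ℤ) (hk1 : -(n : ℤ) ≤ k) (hk2 : k ≤ (n : ℤ))
    (t rmin rmax : ℕ) (ht : (t : ℤ) = (n : ℤ) + k)
    (hrmin : rmin = (t + 1) / 2) (hrmax : rmax = min n t)
    (Qk : Submodule ℝ (MvPolynomial (Fin (n + 1)) ℝ))
    (hQk : Qk = Submodule.span ℝ {q : MvPolynomial (Fin (n + 1)) ℝ |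
      ∃ i j : Fin (n + 1), (i : ℕ) + (j : ℕ) = t ∧ (i : ℕ) ≤ (j : ℕ) ∧
        q = MvPolynomial.X i * MvPolynomial.X j})
    (Qkr : ℕ → MvPolynomial (Fin (n + 1)) ℝ)
    (hQkr : ∀ r : ℕ, Qkr r =
      ∑ i ∈ Finset.Icc (t - r) r,
        ((-1 : ℝ) ^ i * ((((i : ℤ) - k + 1).toNat.choose (n - r + 1) : ℕ) : ℝ) *
          (((n - i).choose (n - r) : ℕ) : ℝ)) •
          (MvPolynomial.X (Fin.ofNat (n + 1) (i : ℕ)) * MvPolynomial.X (Fin.ofNat (n + 1) (t - i : ℕ)))) :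
    (∀ r ∈ Finset.Icc rmin rmax, Qkr r ∈ Qk) ∧
    LinearIndependent ℝ (fun r : { r // r ∈ Finset.Icc rmin rmax } => Qkr (r : ℕ)) ∧
    Submodule.span ℝ (Set.range fun r : { r // r ∈ Finset.Icc rmin rmax } => Qkr (r : ℕ)) = Qk ∧
    Module.finrank ℝ Qk = (n - k.natAbs) / 2 + 1 ∧
    rmax - rmin + 1 = (n - k.natAbs) / 2 + 1 := by
  classical
  have ht2n : t ≤ 2 * n := by omega
  have hb : rmin ≤ rmax ∧ rmax ≤ n ∧ rmax ≤ t ∧ t ≤ 2 * rmin ∧ rmin ≤ t ∧ rmin ≤ n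
      ∧ t ≤ n + rmin := by omega
  obtain ⟨hb1, hb2, hb3, hb4, hb5, hb6, hb7⟩ := hb
  -- min of each pair lies in the index interval
  have hminJ : ∀ r, rmin ≤ r → r ≤ rmax → ∀ i, t - r ≤ i → i ≤ r →
      min i (t - i) ∈ Finset.Icc (t - rmax) (t - rmin) := by
    intro r hra hrb i hi1 hi2
    rcases le_total i (t - i) with h | h
    · rw [min_eq_left h, Finset.mem_Icc]; omega
    · rw [min_eq_right h, Finset.mem_Icc]; omega
  -- rewrite Qkr r in terms of the monomials eMon
  have hsumAll : ∀ r, rmin ≤ r → r ≤ rmax →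
      Qkr r = ∑ i ∈ Finset.Icc (t - r) r, cCoef n r k i • eMon n t (min i (t - i)) := by
    intro r hra hrb
    rw [hQkr r]
    refine Finset.sum_congr rfl fun i hi => ?_
    rw [Finset.mem_Icc] at hi
    have hterm : (MvPolynomial.X (Fin.ofNat (n + 1) i) : MvPolynomial (Fin (n + 1)) ℝ)
        * MvPolynomial.X (Fin.ofNat (n + 1) (t - i)) = eMon n t (min i (t - i)) :=
      aux_term (n := n) (t := t) i (by omega)
    rw [hterm]
    rfl
  -- the generating set equals the image of eMon
  have hsetEq : {q : MvPolynomial (Fin (n + 1)) ℝ |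
      ∃ i j : Fin (n + 1), (i : ℕ) + (j : ℕ) = t ∧ (i : ℕ) ≤ (j : ℕ) ∧
        q = MvPolynomial.X i * MvPolynomial.X j}
      = eMon n t '' ↑(Finset.Icc (t - rmax) (t - rmin)) := by
    ext q
    constructor
    · rintro ⟨i, j, hij, hle, rfl⟩
      have hi' : (i : ℕ) < n + 1 := i.isLt
      have hj' : (j : ℕ) < n + 1 := j.isLt
      refine ⟨(i : ℕ), ?_, ?_⟩
      · rw [Finset.mem_coe, Finset.mem_Icc]; omega
      · rw [eMon, dExp]
        have h2 : t - (i : ℕ) = (j : ℕ) := by omega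
        rw [h2, Fin.cast_val_eq_self, Fin.cast_val_eq_self, aux_XX]
    · rintro ⟨j, hj, rfl⟩
      rw [Finset.mem_coe, Finset.mem_Icc] at hj
      refine ⟨((j : ℕ) : Fin (n + 1)), (((t - j : ℕ)) : Fin (n + 1)), ?_, ?_, ?_⟩
      · rw [Fin.val_cast_of_lt (by omega), Fin.val_cast_of_lt (by omega)]; omega
      · rw [Fin.val_cast_of_lt (by omega), Fin.val_cast_of_lt (by omega)]; omega
      · rw [aux_XX]; rfl
  have hQk' : Qk = Submodule.span ℝ (eMon n t '' ↑(Finset.Icc (t - rmax) (t - rmin))) := by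
    rw [hQk, hsetEq]
  -- key triangularity claim, by strong induction
  have claim : ∀ r, rmin ≤ r → r ≤ rmax →
      eMon n t (t - r) ∈ Submodule.span ℝ (Qkr '' Set.Icc rmin r) := by
    intro r
    induction r using Nat.strong_induction_on with
    | _ r ih =>
      intro hra hrb
      have hQmem : Qkr r ∈ Submodule.span ℝ (Qkr '' Set.Icc rmin r) :=
        Submodule.subset_span ⟨r, ⟨hra, le_refl r⟩, rfl⟩
      have hsum := hsumAll r hra hrb
      rcases eq_or_lt_of_le (show t - r ≤ r by omega) with heq | hlt
      · -- t = 2r, a single term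
        have ht2 : t = 2 * r := by omega
        rw [heq, Finset.Icc_self, Finset.sum_singleton, heq, min_self] at hsum
        rw [aux_cself ht (by omega) ht2] at hsum
        have hre : eMon n t (t - r) = ((-1 : ℝ) ^ r) • Qkr r := by
          rw [heq, hsum, smul_smul, ← mul_pow]
          norm_num
        rw [hre]
        exact Submodule.smul_mem _ _ hQmem
      · -- t - r < r : split off the two boundary terms
        have hsplit : Finset.Icc (t - r) r = insert (t - r) (insert r (Finset.Ioo (t - r) r)) := by
          ext x
          simp only [Finset.mem_Icc, Finset.mem_insert, Finset.mem_Ioo]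
          omega
        have hnm1 : (t - r) ∉ insert r (Finset.Ioo (t - r) r) := by
          simp only [Finset.mem_insert, Finset.mem_Ioo]; omega
        have hnm2 : r ∉ Finset.Ioo (t - r) r := by simp
        rw [hsplit, Finset.sum_insert hnm1, Finset.sum_insert hnm2] at hsum
        have hm1 : min (t - r) (t - (t - r)) = t - r := by
          have h2 : t - (t - r) = r := by omega
          rw [h2]
          exact min_eq_left (by omega)
        have hm2 : min r (t - r) = t - r := min_eq_right (by omega)
        rw [hm1, hm2] at hsum
        have hsum2 : Qkr r = (cCoef n r k (t - r) + cCoef n r k r) • eMon n t (t - r)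
            + ∑ i ∈ Finset.Ioo (t - r) r, cCoef n r k i • eMon n t (min i (t - i)) := by
          rw [hsum, add_smul]; abel
        have hSmid : (∑ i ∈ Finset.Ioo (t - r) r, cCoef n r k i • eMon n t (min i (t - i)))
            ∈ Submodule.span ℝ (Qkr '' Set.Icc rmin r) := by
          refine Submodule.sum_mem _ fun i hi => ?_
          rw [Finset.mem_Ioo] at hi
          refine Submodule.smul_mem _ _ ?_
          rcases le_total i (t - i) with h | h
          · rw [min_eq_left h]
            have h5 : t - (t - i) = i := by omega
            have hmem := ih (t - i) (by omega) (by omega) (by omega)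
            rw [h5] at hmem
            exact Submodule.span_mono
              (Set.image_mono (Set.Icc_subset_Icc_right (by omega))) hmem
          · rw [min_eq_right h]
            have hmem := ih i (by omega) (by omega) (by omega)
            exact Submodule.span_mono
              (Set.image_mono (Set.Icc_subset_Icc_right (by omega))) hmem
        have hdne : cCoef n r k (t - r) + cCoef n r k r ≠ 0 :=
          aux_diag_ne ht (by omega) (by omega) (by omega) (by omega)
        have hfin : eMon n t (t - r) = (cCoef n r k (t - r) + cCoef n r k r)⁻¹ •
            (Qkr r - ∑ i ∈ Finset.Ioo (t - r) r, cCoef n r k i • eMon n t (min i (t - i))) := by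
          rw [hsum2, add_sub_cancel_right, smul_smul, inv_mul_cancel₀ hdne, one_smul]
        rw [hfin]
        exact Submodule.smul_mem _ _ (Submodule.sub_mem _ hQmem hSmid)
  -- span equality
  have hspanle : Submodule.span ℝ
      (Set.range fun r : { r // r ∈ Finset.Icc rmin rmax } => Qkr (r : ℕ)) ≤ Qk := by
    rw [Submodule.span_le]
    rintro x ⟨⟨r, hr⟩, rfl⟩
    rw [Finset.mem_Icc] at hr
    have hmem : Qkr r ∈ Qk := by
      rw [hQk', hsumAll r hr.1 hr.2]
      refine Submodule.sum_mem _ fun i hi => Submodule.smul_mem _ _ (Submodule.subset_span ?_)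
      rw [Finset.mem_Icc] at hi
      exact ⟨min i (t - i), Finset.mem_coe.mpr (hminJ r hr.1 hr.2 i hi.1 hi.2), rfl⟩
    exact hmem
  have hgele : Qk ≤ Submodule.span ℝ
      (Set.range fun r : { r // r ∈ Finset.Icc rmin rmax } => Qkr (r : ℕ)) := by
    rw [hQk', Submodule.span_le]
    rintro x ⟨j, hj, rfl⟩
    rw [Finset.mem_coe, Finset.mem_Icc] at hj
    have hgem := claim (t - j) (by omega) (by omega)
    have h5 : t - (t - j) = j := by omega
    rw [h5] at hgem
    rw [SetLike.mem_coe]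
    refine Submodule.span_le.mpr ?_ hgem
    rintro y ⟨r', hr', rfl⟩
    rw [Set.mem_Icc] at hr'
    exact Submodule.subset_span ⟨⟨r', Finset.mem_Icc.mpr ⟨hr'.1, by omega⟩⟩, rfl⟩
  have hspan : Submodule.span ℝ
      (Set.range fun r : { r // r ∈ Finset.Icc rmin rmax } => Qkr (r : ℕ)) = Qk :=
    le_antisymm hspanle hgele
  -- linear independence of the monomials
  have hLIe : LinearIndependent ℝ
      (fun j : { x // x ∈ Finset.Icc (t - rmax) (t - rmin) } => eMon n t (j : ℕ)) := by
    have hcomp : (fun j : { x // x ∈ Finset.Icc (t - rmax) (t - rmin) } => eMon n t (j : ℕ))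
        = (⇑(MvPolynomial.basisMonomials (Fin (n + 1)) ℝ)) ∘
          (fun j : { x // x ∈ Finset.Icc (t - rmax) (t - rmin) } => dExp n t (j : ℕ)) := by
      funext j
      simp [eMon, MvPolynomial.coe_basisMonomials]
    rw [hcomp]
    refine (MvPolynomial.basisMonomials (Fin (n + 1)) ℝ).linearIndependent.comp _ ?_
    rintro ⟨j1, hj1⟩ ⟨j2, hj2⟩ hEq
    rw [Finset.mem_Icc] at hj1 hj2
    have hEq' : dExp n t j1 = dExp n t j2 := hEq
    refine Subtype.ext ?_
    show j1 = j2
    exact aux_inj (by omega) (by omega) (by omega) (by omega) (by omega) hEq'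
  have hrange : (Set.range fun j : { x // x ∈ Finset.Icc (t - rmax) (t - rmin) } =>
      eMon n t (j : ℕ)) = eMon n t '' ↑(Finset.Icc (t - rmax) (t - rmin)) := by
    ext x
    simp only [Set.mem_range, Set.mem_image, Finset.mem_coe, Subtype.exists]
    constructor
    · rintro ⟨j, hj, rfl⟩; exact ⟨j, hj, rfl⟩
    · rintro ⟨j, hj, rfl⟩; exact ⟨j, hj, rfl⟩
  have hrkQk : Module.finrank ℝ Qk = rmax - rmin + 1 := by
    rw [hQk', ← hrange, finrank_span_eq_card hLIe, Fintype.card_coe, Nat.card_Icc]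
    omega
  refine ⟨?_, ?_, hspan, ?_, ?_⟩
  · intro r hr
    rw [← hspan]
    exact Submodule.subset_span ⟨⟨r, hr⟩, rfl⟩
  · rw [linearIndependent_iff_card_eq_finrank_span]
    unfold Set.finrank
    rw [hspan, hrkQk, Fintype.card_coe, Nat.card_Icc]
    omega
  · rw [hrkQk]; omega
  · omega
end
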